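/- arXiv:2602.18234 — 8 statements merged into one kernel-verified Lean document; each statement's English description precedes it below -/
import Mathlib

section
/- Let α, β ∈ (0,1). Then for all integers k ≥ 1, the sum ∑_{i=1}^{k} (k−(i−1))^(β−1) · i^(α−1) is at most (Γ(α)Γ(β)/Γ(α+β)) · k^(α+β−1). -/
/-!
On each `[i - 1, i]` the integrand `t ^ (α - 1) * (k - t) ^ (β - 1)` is bounded below by the
`i`-th summand, since both factors have non-positive exponents and `t ≤ i`, `k - t ≤ k - (i - 1)`.
Summing over `i` bounds the sum by `∫₀ᵏ t ^ (α - 1) (k - t) ^ (β - 1) dt`, which is the Beta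
integral `B(α, β) k ^ (α + β - 1)` after scaling.
-/

open MeasureTheory intervalIntegral

theorem integral_rpow_mul_sub_rpow {α β a : ℝ} (hα : 0 < α) (hβ : 0 < β) (ha : 0 < a) :
    ∫ t in 0..a, t ^ (α - 1) * (a - t) ^ (β - 1) =
      ProbabilityTheory.beta α β * a ^ (α + β - 1) := by
  apply Complex.ofReal_injective
  have hcpow : ∫ t in 0..a, ((t ^ (α - 1) * (a - t) ^ (β - 1) : ℝ) : ℂ) =
      ∫ t in 0..a, (t : ℂ) ^ ((α : ℂ) - 1) * ((a : ℂ) - t) ^ ((β : ℂ) - 1) := by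
    refine integral_congr fun t ht => ?_
    rw [Set.uIcc_of_le ha.le] at ht
    push_cast
    rw [Complex.ofReal_cpow ht.1, Complex.ofReal_cpow (sub_nonneg.2 ht.2)]
    push_cast; rfl
  rw [← integral_ofReal, hcpow, Complex.betaIntegral_scaled _ _ ha,
    Complex.betaIntegral_eq_Gamma_mul_div _ _ (by simpa) (by simpa), ProbabilityTheory.beta]
  push_cast
  rw [Complex.ofReal_cpow ha.le, ← Complex.Gamma_ofReal, ← Complex.Gamma_ofReal,
    ← Complex.Gamma_ofReal]
  push_cast
  ring

theorem intervalIntegrable_rpow_mul_sub_rpow {α β a : ℝ} (hα : 0 < α) (hβ : 0 < β) (ha : 0 < a) :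
    IntervalIntegrable (fun t => t ^ (α - 1) * (a - t) ^ (β - 1)) volume 0 a :=
  intervalIntegrable_of_integral_ne_zero <| by
    rw [integral_rpow_mul_sub_rpow hα hβ ha]
    have := ProbabilityTheory.beta_pos hα hβ
    positivity

theorem sub_rpow_mul_rpow_le_of_mem_Ioo {α β a u t : ℝ} (hα : α ≤ 1) (hβ : β ≤ 1)
    (hu : u ≤ a) (ht : t ∈ Set.Ioo (u - 1) u) (ht0 : 0 < t) :
    (a - (u - 1)) ^ (β - 1) * u ^ (α - 1) ≤ t ^ (α - 1) * (a - t) ^ (β - 1) := by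
  rw [mul_comm]
  exact mul_le_mul (Real.rpow_le_rpow_of_nonpos ht0 ht.2.le (by linarith))
    (Real.rpow_le_rpow_of_nonpos (by linarith [ht.2]) (by linarith [ht.1]) (by linarith))
    (Real.rpow_nonneg (by linarith [ht.2]) _) (by positivity)

theorem sum_Icc_sub_rpow_mul_rpow_le_integral {α β : ℝ} (hα₀ : 0 < α) (hα₁ : α ≤ 1)
    (hβ₀ : 0 < β) (hβ₁ : β ≤ 1) (k : ℕ) :
    ∑ i ∈ Finset.Icc 1 k, ((k : ℝ) - ((i : ℝ) - 1)) ^ (β - 1) * (i : ℝ) ^ (α - 1) ≤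
      ∫ t in 0..(k : ℝ), t ^ (α - 1) * ((k : ℝ) - t) ^ (β - 1) := by
  set f : ℝ → ℝ := fun t => t ^ (α - 1) * ((k : ℝ) - t) ^ (β - 1)
  have hbounds : ∀ i ∈ Finset.Ico 1 (k + 1), (1 : ℝ) ≤ i ∧ (i : ℝ) ≤ k := fun i hi => by
    obtain ⟨hi₁, hik⟩ := Finset.mem_Ico.1 hi
    exact ⟨by exact_mod_cast hi₁, by exact_mod_cast Nat.lt_succ_iff.1 hik⟩
  have hf : ∀ i ∈ Finset.Ico 1 (k + 1), IntervalIntegrable f volume ((i : ℝ) - 1) i := by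
    intro i hi
    obtain ⟨hi₁', hik'⟩ := hbounds i hi
    refine (intervalIntegrable_rpow_mul_sub_rpow hα₀ hβ₀ (by linarith)).mono_set ?_
    rw [Set.uIcc_of_le (by linarith), Set.uIcc_of_le (by linarith)]
    exact Set.Icc_subset_Icc (by linarith) hik'
  have hsum := sum_integral_adjacent_intervals_Ico (a := fun i : ℕ => (i : ℝ) - 1)
    (μ := volume) (Nat.le_add_left 1 k) (by simpa using hf)
  push_cast at hsum
  simp only [sub_self, add_sub_cancel_right] at hsum
  rw [← hsum, ← Finset.Ico_add_one_right_eq_Icc]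
  refine Finset.sum_le_sum fun i hi => ?_
  obtain ⟨hi₁', hik'⟩ := hbounds i hi
  calc ((k : ℝ) - ((i : ℝ) - 1)) ^ (β - 1) * (i : ℝ) ^ (α - 1)
      = ∫ _ in (i : ℝ) - 1..i, ((k : ℝ) - ((i : ℝ) - 1)) ^ (β - 1) * (i : ℝ) ^ (α - 1) := by
        simp
    _ ≤ ∫ t in (i : ℝ) - 1..i, f t :=
        integral_mono_on_of_le_Ioo (by linarith) intervalIntegrable_const (hf i hi)
          fun t ht => sub_rpow_mul_rpow_le_of_mem_Ioo hα₁ hβ₁ hik' ht (by linarith [ht.1])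

/-- Discrete Beta comparison: for `α, β ∈ (0,1)` and `k ≥ 1`,
`∑_{i=1}^k (k-(i-1))^(β-1) i^(α-1) ≤ (Γ(α)Γ(β)/Γ(α+β)) k^(α+β-1)`. -/
theorem stmt_2 (α β : ℝ) (hα : α ∈ Set.Ioo (0 : ℝ) 1) (hβ : β ∈ Set.Ioo (0 : ℝ) 1)
    (k : ℕ) (hk : 1 ≤ k) :
    ∑ i ∈ Finset.Icc 1 k, ((k : ℝ) - ((i : ℝ) - 1)) ^ (β - 1) * (i : ℝ) ^ (α - 1) ≤
      Real.Gamma α * Real.Gamma β / Real.Gamma (α + β) * (k : ℝ) ^ (α + β - 1) :=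
  (sum_Icc_sub_rpow_mul_rpow_le_integral hα.1 hα.2.le hβ.1 hβ.2.le k).trans_eq
    (integral_rpow_mul_sub_rpow hα.1 hβ.1 (by exact_mod_cast hk))
end

section
/- Let T > 0, n ≥ 1, t_k = kT/n for k ∈ {0,…,n}, and α, β ∈ (0,1). There exists a constant C depending only on α and β such that for all k ≤ n, ∑_{i=1}^{k} ((t_k − t_{i−1})^β − (t_k − t_i)^β)(t_i^α − t_{i−1}^α) ≤ C · (T/n)^(α+β) · k^(α+β−1). -/
/-!
Scaling by `T / n` reduces the estimate to `∑_{j<k} Δ_β(k-1-j) Δ_α(j) ≤ 4 k^(α+β-1)`, where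
`Δ_p(x) = (x+1)^p - x^p`. Since `x^p ≥ x (x+1)^(p-1)`, one has `Δ_p(x) ≤ (x+1)^(p-1)`. Split the
sum at `k/2`: on the half where `j` is small the `β`-increments are at most `2 k^(β-1)` and the
`α`-increments telescope to at most `k^α`; the other half is the same sum with `α` and `β`
exchanged, after reflecting `j ↦ k-1-j`.
-/

open Finset Real

noncomputable def powIncr (p x : ℝ) : ℝ := (x + 1) ^ p - x ^ p

section powIncr

variable {p x : ℝ}

lemma powIncr_nonneg (hp : 0 ≤ p) (hx : 0 ≤ x) : 0 ≤ powIncr p x :=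
  sub_nonneg.mpr (rpow_le_rpow hx (by linarith) hp)

lemma powIncr_le (hp : p ≤ 1) (hx : 0 ≤ x) : powIncr p x ≤ (x + 1) ^ (p - 1) := by
  have hx1 : 0 < x + 1 := by linarith
  have hlow : x * (x + 1) ^ (p - 1) ≤ x ^ p := by
    rcases hx.eq_or_lt with rfl | hx0
    · simpa using rpow_nonneg le_rfl p
    · calc x * (x + 1) ^ (p - 1) ≤ x * x ^ (p - 1) :=
            mul_le_mul_of_nonneg_left (rpow_le_rpow_of_nonpos hx0 (by linarith) (by linarith)) hx
        _ = x ^ p := by rw [rpow_sub_one hx0.ne']; field_simp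
  have hsplit : (x + 1) ^ p = (x + 1) * (x + 1) ^ (p - 1) := by
    rw [rpow_sub_one hx1.ne']; field_simp
  unfold powIncr
  nlinarith

lemma sum_range_powIncr_le (p : ℝ) (m : ℕ) : ∑ j ∈ range m, powIncr p j ≤ (m : ℝ) ^ p := by
  have := sum_range_sub (fun j : ℕ => (j : ℝ) ^ p) m
  simp only [Nat.cast_add, Nat.cast_one, Nat.cast_zero] at this
  simp only [powIncr, this, sub_le_self_iff]
  exact rpow_nonneg le_rfl p

lemma powIncr_mul_rpow {h : ℝ} (hh : 0 ≤ h) (hx : 0 ≤ x) :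
    ((x + 1) * h) ^ p - (x * h) ^ p = h ^ p * powIncr p x := by
  rw [mul_rpow (by linarith) hh, mul_rpow hx hh, powIncr]
  ring

end powIncr

lemma div_two_rpow_le {x q : ℝ} (hx : 0 ≤ x) (hq : -1 ≤ q) : (x / 2) ^ q ≤ 2 * x ^ q := by
  have h2 : (1 / 2 : ℝ) ≤ 2 ^ q := by
    calc (1 / 2 : ℝ) = 2 ^ (-1 : ℝ) := by norm_num
      _ ≤ 2 ^ q := rpow_le_rpow_of_exponent_le one_le_two hq
  rw [div_rpow hx zero_le_two, div_le_iff₀ (by positivity)]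
  nlinarith [rpow_nonneg hx q]

lemma sum_range_mul_reflect {R : Type*} [CommSemiring R] (f g : ℕ → R) (a b : ℕ) :
    ∑ j ∈ range (a + b), f (a + b - 1 - j) * g j
      = ∑ j ∈ range a, f (a + b - 1 - j) * g j + ∑ j ∈ range b, g (a + b - 1 - j) * f j := by
  rw [sum_range_add, ← sum_range_reflect _ b]
  congr 1
  refine sum_congr rfl fun j hj => ?_
  have hj := mem_range.mp hj
  rw [mul_comm, show a + b - 1 - (a + (b - 1 - j)) = j by omega,
    show a + (b - 1 - j) = a + b - 1 - j by omega]

lemma sum_range_powIncr_mul_powIncr_le_of_two_mul_le {α β : ℝ} {k m : ℕ} (hα : 0 ≤ α)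
    (hβ₀ : 0 ≤ β) (hβ₁ : β ≤ 1) (hm : 2 * m ≤ k + 1) :
    ∑ j ∈ range m, powIncr β (k - 1 - j : ℕ) * powIncr α j ≤ 2 * (k : ℝ) ^ (α + β - 1) := by
  rcases Nat.eq_zero_or_pos m with rfl | hm0
  · simp only [range_zero, sum_empty]
    positivity
  have hk : (0 : ℝ) < k := by exact_mod_cast (show 0 < k by omega)
  have hβincr : ∀ j ∈ range m, powIncr β (k - 1 - j : ℕ) ≤ 2 * (k : ℝ) ^ (β - 1) := by
    intro j hj
    have hj := mem_range.mp hj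
    have hfar : (k : ℝ) / 2 ≤ ((k - 1 - j : ℕ) : ℝ) + 1 := by
      rw [Nat.cast_sub (by omega), Nat.cast_sub (by omega)]
      have : (2 * m : ℝ) ≤ k + 1 := by exact_mod_cast hm
      have : (j : ℝ) + 1 ≤ m := by exact_mod_cast hj
      push_cast
      linarith
    calc powIncr β (k - 1 - j : ℕ) ≤ (((k - 1 - j : ℕ) : ℝ) + 1) ^ (β - 1) :=
          powIncr_le hβ₁ (Nat.cast_nonneg _)
      _ ≤ ((k : ℝ) / 2) ^ (β - 1) := rpow_le_rpow_of_nonpos (by positivity) hfar (by linarith)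
      _ ≤ 2 * (k : ℝ) ^ (β - 1) := div_two_rpow_le hk.le (by linarith)
  calc ∑ j ∈ range m, powIncr β (k - 1 - j : ℕ) * powIncr α j
      ≤ ∑ j ∈ range m, 2 * (k : ℝ) ^ (β - 1) * powIncr α j :=
        sum_le_sum fun j hj =>
          mul_le_mul_of_nonneg_right (hβincr j hj) (powIncr_nonneg hα (Nat.cast_nonneg j))
    _ ≤ 2 * (k : ℝ) ^ (β - 1) * (k : ℝ) ^ α := by
        rw [← mul_sum]
        gcongr
        exact (sum_range_powIncr_le α m).trans
          (rpow_le_rpow (Nat.cast_nonneg m) (by exact_mod_cast (show m ≤ k by omega)) hα)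
    _ = 2 * (k : ℝ) ^ (α + β - 1) := by
        rw [mul_assoc, ← rpow_add hk]
        ring_nf

lemma sum_range_powIncr_mul_powIncr_le {α β : ℝ} (hα : α ∈ Set.Icc (0 : ℝ) 1)
    (hβ : β ∈ Set.Icc (0 : ℝ) 1) (k : ℕ) :
    ∑ j ∈ range k, powIncr β (k - 1 - j : ℕ) * powIncr α j ≤ 4 * (k : ℝ) ^ (α + β - 1) := by
  have hk : (k + 1) / 2 + k / 2 = k := by omega
  have hsplit := sum_range_mul_reflect (fun i : ℕ => powIncr β i) (fun i : ℕ => powIncr α i)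
    ((k + 1) / 2) (k / 2)
  rw [hk] at hsplit
  rw [hsplit]
  have h₁ := sum_range_powIncr_mul_powIncr_le_of_two_mul_le (k := k) (m := (k + 1) / 2)
    hα.1 hβ.1 hβ.2 (by omega)
  have h₂ := sum_range_powIncr_mul_powIncr_le_of_two_mul_le (k := k) (m := k / 2)
    hβ.1 hα.1 hα.2 (by omega)
  rw [add_comm β α] at h₂
  linarith

lemma grid_sum_eq (α β : ℝ) {T : ℝ} (hT : 0 < T) {n : ℕ} (hn : 1 ≤ n) (k : ℕ) :
    ∑ i ∈ Icc 1 k,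
        (((k : ℝ) * T / n - ((i : ℝ) - 1) * T / n) ^ β
            - ((k : ℝ) * T / n - (i : ℝ) * T / n) ^ β)
          * (((i : ℝ) * T / n) ^ α - (((i : ℝ) - 1) * T / n) ^ α)
      = (T / n) ^ (α + β) * ∑ j ∈ range k, powIncr β (k - 1 - j : ℕ) * powIncr α j := by
  have hh : 0 < T / n := div_pos hT (by exact_mod_cast hn)
  rw [← Ico_add_one_right_eq_Icc, sum_Ico_eq_sum_range, Nat.add_sub_cancel, mul_sum]
  refine sum_congr rfl fun j hj => ?_
  have hj := mem_range.mp hj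
  have hkj : ((k - 1 - j : ℕ) : ℝ) = k - 1 - j := by
    rw [Nat.cast_sub (by omega), Nat.cast_sub (by omega)]
    push_cast
    ring
  have hβside : ((k : ℝ) * T / n - ((↑(1 + j) : ℝ) - 1) * T / n) ^ β
      - ((k : ℝ) * T / n - (↑(1 + j) : ℝ) * T / n) ^ β
      = (T / n) ^ β * powIncr β (k - 1 - j : ℕ) := by
    rw [← powIncr_mul_rpow hh.le (Nat.cast_nonneg _), hkj]
    push_cast
    ring_nf
  have hαside : ((↑(1 + j) : ℝ) * T / n) ^ α - (((↑(1 + j) : ℝ) - 1) * T / n) ^ α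
      = (T / n) ^ α * powIncr α j := by
    rw [← powIncr_mul_rpow hh.le (Nat.cast_nonneg _)]
    push_cast
    ring_nf
  rw [hβside, hαside, rpow_add hh]
  ring

/-- Grid estimate: with `t_i = iT/n`, for `α, β ∈ (0,1)` there is `C = C(α,β)` such that
`∑_{i=1}^k ((t_k - t_{i-1})^β - (t_k - t_i)^β)(t_i^α - t_{i-1}^α) ≤ C (T/n)^(α+β) k^(α+β-1)`. -/
theorem stmt_3 (α β : ℝ) (hα : α ∈ Set.Ioo (0 : ℝ) 1) (hβ : β ∈ Set.Ioo (0 : ℝ) 1) :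
    ∃ C : ℝ, 0 < C ∧ ∀ T : ℝ, 0 < T → ∀ n : ℕ, 1 ≤ n → ∀ k : ℕ, k ≤ n →
      ∑ i ∈ Finset.Icc 1 k,
        (((k : ℝ) * T / n - ((i : ℝ) - 1) * T / n) ^ β
            - ((k : ℝ) * T / n - (i : ℝ) * T / n) ^ β)
          * (((i : ℝ) * T / n) ^ α - (((i : ℝ) - 1) * T / n) ^ α)
        ≤ C * (T / n) ^ (α + β) * (k : ℝ) ^ (α + β - 1) := by
  refine ⟨4, four_pos, fun T hT n hn k _ => ?_⟩
  rw [grid_sum_eq α β hT hn k, mul_assoc, mul_left_comm]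
  exact mul_le_mul_of_nonneg_left
    (sum_range_powIncr_mul_powIncr_le (Set.Ioo_subset_Icc_self hα)
      (Set.Ioo_subset_Icc_self hβ) k) (by positivity)
end

section
/- Let X be the stochastic Volterra Ornstein-Uhlenbeck process X_t = x_0 + ∫_0^t ((t−s)^(α−1)/Γ(α))(κ_1 + κ_2 X_s) ds + σ ∫_0^t ((t−s)^(α−1)/Γ(α)) dW_s with α ∈ (1/2,1]. Then E[X_t] = x_0 · E_α(κ_2 t^α) + (κ_1/κ_2)(E_α(κ_2 t^α) − 1) for κ_2 ≠ 0, where E_α(z) = ∑_{i=0}^∞ z^i/Γ(αi+1) is the Mittag-Leffler function; equivalently E[X_t] = ∑_{i=0}^∞ κ_2^i (x_0 t^(αi)/Γ(αi+1) + κ_1 t^(α(i+1))/Γ(α(i+1)+1)). -/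
/-!
The series `M t = ∑ i, meanTerm α x₀ κ₁ κ₂ i t` is the Picard expansion of the integral equation.
Writing `I^α` for the Riemann–Liouville integral, the power rule
`I^α [s ^ β / Γ(β + 1)] = t ^ (β + α) / Γ(β + α + 1)` (a Beta integral) shows that `κ₂ I^α` maps
the `i`-th term to the `(i + 1)`-st, so `M = x₀ + I^α (κ₁ + κ₂ M)`. Sums and integrals may be
exchanged because the terms are dominated by a Mittag-Leffler series, which converges by the ratio
test since log-convexity of `Γ` gives `(x + α) ^ α Γ(x + 1) ≤ Γ(x + α + 1)`.

Conversely, the difference `d` of two continuous solutions satisfies `d = κ₂ I^α d`; iterating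
gives `|d t| ≤ C |κ₂| ^ n t ^ (α n) / Γ(α n + 1)`, again the terms of a convergent Mittag-Leffler
series, so `d = 0`. Regrouping the series of `M` gives the closed form.
-/

open MeasureTheory

/-- The Mittag-Leffler function `E_α(z) = ∑_{i=0}^∞ z^i / Γ(αi+1)`. -/
noncomputable def mittagLeffler (α z : ℝ) : ℝ := ∑' i : ℕ, z ^ i / Real.Gamma (α * i + 1)

open Real Set Filter Topology

/-- Wendel's inequality, from log-convexity of `Γ` between `x + α` and `x + α + 1`. -/
theorem rpow_mul_Gamma_add_one_le_Gamma {α x : ℝ} (hα : 0 < α) (hα1 : α ≤ 1) (hx : 0 < x) :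
    (x + α) ^ α * Gamma (x + 1) ≤ Gamma (x + α + 1) := by
  have hxα : 0 < x + α := by linarith
  have hΓ : 0 < Gamma (x + α) := Gamma_pos_of_pos hxα
  have hrec : Gamma (x + α + 1) = (x + α) * Gamma (x + α) := Gamma_add_one hxα.ne'
  rcases hα1.lt_or_eq with hα1 | rfl
  · have hconv := Gamma_mul_add_mul_le_rpow_Gamma_mul_rpow_Gamma hxα (by linarith : 0 < x + α + 1)
      hα (sub_pos.2 hα1) (by ring)
    rw [show α * (x + α) + (1 - α) * (x + α + 1) = x + 1 by ring, hrec,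
      mul_rpow hxα.le hΓ.le] at hconv
    calc (x + α) ^ α * Gamma (x + 1)
        ≤ (x + α) ^ α * (Gamma (x + α) ^ α * ((x + α) ^ (1 - α) * Gamma (x + α) ^ (1 - α))) := by
          gcongr
      _ = (x + α) ^ (α + (1 - α)) * Gamma (x + α) ^ (α + (1 - α)) := by
          rw [rpow_add hxα, rpow_add hΓ]; ring
      _ = Gamma (x + α + 1) := by rw [add_sub_cancel, rpow_one, rpow_one, hrec]
  · rw [rpow_one, hrec]

theorem summable_pow_div_Gamma {α : ℝ} (hα : 0 < α) (hα1 : α ≤ 1) (z c : ℝ) :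
    Summable fun i : ℕ => z ^ i / Gamma (α * i + c) := by
  have hlin : Tendsto (fun n : ℕ => α * n + (c - 1)) atTop atTop :=
    tendsto_atTop_add_const_right _ _ (tendsto_natCast_atTop_atTop.const_mul_atTop hα)
  have hpow : Tendsto (fun n : ℕ => (α * n + (c - 1) + α) ^ α) atTop atTop :=
    (tendsto_rpow_atTop hα).comp (tendsto_atTop_add_const_right _ _ hlin)
  refine summable_of_ratio_norm_eventually_le (r := 1 / 2) (by norm_num) ?_
  filter_upwards [hlin.eventually_gt_atTop 0, hpow.eventually_ge_atTop (2 * |z|)] with n hx hz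
  set x := α * n + (c - 1)
  have hΓ : 0 < Gamma (x + 1) := Gamma_pos_of_pos (by linarith)
  have hΓ' : 0 < Gamma (x + α + 1) := Gamma_pos_of_pos (by linarith)
  have hratio : 2 * |z| * Gamma (x + 1) ≤ Gamma (x + α + 1) :=
    (mul_le_mul_of_nonneg_right hz hΓ.le).trans (rpow_mul_Gamma_add_one_le_Gamma hα hα1 hx)
  rw [show α * ((n + 1 : ℕ) : ℝ) + c = x + α + 1 by push_cast; ring,
    show α * n + c = x + 1 by ring, norm_div, norm_div, norm_pow, norm_pow, Real.norm_eq_abs,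
    Real.norm_of_nonneg hΓ.le, Real.norm_of_nonneg hΓ'.le,
    div_le_iff₀ hΓ', pow_succ]
  calc |z| ^ n * |z| = 1 / 2 * (|z| ^ n / Gamma (x + 1)) * (2 * |z| * Gamma (x + 1)) := by
        field_simp
    _ ≤ 1 / 2 * (|z| ^ n / Gamma (x + 1)) * Gamma (x + α + 1) := by gcongr

theorem integral_rpow_mul_one_sub_rpow {p q : ℝ} (hp : 0 < p) (hq : 0 < q) :
    ∫ x in (0 : ℝ)..1, x ^ (p - 1) * (1 - x) ^ (q - 1) = Gamma p * Gamma q / Gamma (p + q) := by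
  have hcast : ((∫ x in (0 : ℝ)..1, x ^ (p - 1) * (1 - x) ^ (q - 1) : ℝ) : ℂ)
      = Complex.betaIntegral p q := by
    rw [Complex.betaIntegral, ← intervalIntegral.integral_ofReal]
    refine intervalIntegral.integral_congr fun x hx => ?_
    rw [uIcc_of_le zero_le_one] at hx
    push_cast
    rw [Complex.ofReal_cpow hx.1, Complex.ofReal_cpow (sub_nonneg.2 hx.2)]
    push_cast
    rfl
  apply Complex.ofReal_injective
  rw [hcast, Complex.betaIntegral_eq_Gamma_mul_div p q (by simpa) (by simpa)]
  push_cast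
  rw [← Complex.ofReal_add, Complex.Gamma_ofReal, Complex.Gamma_ofReal, Complex.Gamma_ofReal]

noncomputable def riemannLiouville (α : ℝ) (f : ℝ → ℝ) (t : ℝ) : ℝ :=
  ∫ s in (0 : ℝ)..t, (t - s) ^ (α - 1) / Gamma α * f s

section RiemannLiouville

variable {α : ℝ} {f g : ℝ → ℝ} {t : ℝ}

theorem intervalIntegrable_riemannLiouville_kernel (hα : 0 < α) (t : ℝ) :
    IntervalIntegrable (fun s => (t - s) ^ (α - 1) / Gamma α) volume 0 t := by
  have := (intervalIntegral.intervalIntegrable_rpow' (a := 0) (b := t)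
    (by linarith : -1 < α - 1)).comp_sub_left t
  simpa using this.symm.div_const (Gamma α)

theorem intervalIntegrable_riemannLiouville_integrand (hα : 0 < α) (ht : 0 ≤ t)
    (hf : ContinuousOn f (Icc 0 t)) :
    IntervalIntegrable (fun s => (t - s) ^ (α - 1) / Gamma α * f s) volume 0 t :=
  (intervalIntegrable_riemannLiouville_kernel hα t).mul_continuousOn (by rwa [uIcc_of_le ht])

theorem riemannLiouville_const_mul (c : ℝ) :
    riemannLiouville α (fun s => c * f s) t = c * riemannLiouville α f t := by
  simp only [riemannLiouville, mul_left_comm _ c, intervalIntegral.integral_const_mul]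

theorem riemannLiouville_add (hα : 0 < α) (ht : 0 ≤ t) (hf : ContinuousOn f (Icc 0 t))
    (hg : ContinuousOn g (Icc 0 t)) :
    riemannLiouville α (fun s => f s + g s) t
      = riemannLiouville α f t + riemannLiouville α g t := by
  simp only [riemannLiouville, mul_add]
  exact intervalIntegral.integral_add (intervalIntegrable_riemannLiouville_integrand hα ht hf)
    (intervalIntegrable_riemannLiouville_integrand hα ht hg)

theorem riemannLiouville_sub (hα : 0 < α) (ht : 0 ≤ t) (hf : ContinuousOn f (Icc 0 t))
    (hg : ContinuousOn g (Icc 0 t)) :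
    riemannLiouville α (fun s => f s - g s) t
      = riemannLiouville α f t - riemannLiouville α g t := by
  simp only [riemannLiouville, mul_sub]
  exact intervalIntegral.integral_sub (intervalIntegrable_riemannLiouville_integrand hα ht hf)
    (intervalIntegrable_riemannLiouville_integrand hα ht hg)

theorem abs_riemannLiouville_le (hα : 0 < α) (ht : 0 ≤ t) (hg : ContinuousOn g (Icc 0 t))
    (hfg : ∀ s ∈ Icc 0 t, |f s| ≤ g s) :
    |riemannLiouville α f t| ≤ riemannLiouville α g t := by
  rw [← Real.norm_eq_abs]
  refine intervalIntegral.norm_integral_le_of_norm_le ht (ae_of_all _ fun s hs => ?_)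
    (intervalIntegrable_riemannLiouville_integrand hα ht hg)
  have hk : 0 ≤ (t - s) ^ (α - 1) / Gamma α :=
    div_nonneg (rpow_nonneg (sub_nonneg.2 hs.2) _) (Gamma_pos_of_pos hα).le
  rw [norm_mul, Real.norm_of_nonneg hk, Real.norm_eq_abs]
  exact mul_le_mul_of_nonneg_left (hfg s (Ioc_subset_Icc_self hs)) hk

theorem riemannLiouville_rpow_div_Gamma (hα : 0 < α) {β : ℝ} (hβ : 0 ≤ β) (ht : 0 ≤ t) :
    riemannLiouville α (fun s => s ^ β / Gamma (β + 1)) t = t ^ (β + α) / Gamma (β + α + 1) := by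
  rcases ht.eq_or_lt with rfl | ht
  · rw [riemannLiouville, intervalIntegral.integral_same, zero_rpow (by linarith), zero_div]
  have hsub := intervalIntegral.smul_integral_comp_mul_left
    (fun s => (t - s) ^ (α - 1) / Gamma α * (s ^ β / Gamma (β + 1))) (a := 0) (b := 1) t
  rw [mul_zero, mul_one] at hsub
  have hscale : ∀ u ∈ uIcc (0 : ℝ) 1,
      (t - t * u) ^ (α - 1) / Gamma α * ((t * u) ^ β / Gamma (β + 1))
        = t ^ (α - 1) * t ^ β / (Gamma α * Gamma (β + 1))
          * (u ^ (β + 1 - 1) * (1 - u) ^ (α - 1)) := by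
    intro u hu
    rw [uIcc_of_le zero_le_one] at hu
    rw [show t - t * u = t * (1 - u) by ring, mul_rpow ht.le (sub_nonneg.2 hu.2),
      mul_rpow ht.le hu.1, add_sub_cancel_right]
    ring
  rw [riemannLiouville, ← hsub, intervalIntegral.integral_congr hscale,
    intervalIntegral.integral_const_mul, integral_rpow_mul_one_sub_rpow (by linarith) hα,
    smul_eq_mul, show β + 1 + α = β + α + 1 by ring]
  have hpow : t * (t ^ (α - 1) * t ^ β) = t ^ (β + α) := by
    rw [← rpow_add ht, mul_comm, ← rpow_add_one ht.ne']
    ring_nf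
  have hΓα := (Gamma_pos_of_pos hα).ne'
  have hΓβ := (Gamma_pos_of_pos (by linarith : 0 < β + 1)).ne'
  rw [← hpow]
  field_simp

theorem hasSum_riemannLiouville (hα : 0 < α) (ht : 0 ≤ t) {F : ℕ → ℝ → ℝ}
    (hF : ∀ i, ContinuousOn (F i) (Icc 0 t)) {u : ℕ → ℝ} (hu : Summable u)
    (hFu : ∀ i, ∀ s ∈ Icc 0 t, |F i s| ≤ u i) :
    HasSum (fun i => riemannLiouville α (F i) t)
      (riemannLiouville α (fun s => ∑' i, F i s) t) := by
  have hk : ∀ s ∈ uIoc 0 t, 0 ≤ (t - s) ^ (α - 1) / Gamma α := fun s hs => by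
    rw [uIoc_of_le ht] at hs
    exact div_nonneg (rpow_nonneg (sub_nonneg.2 hs.2) _) (Gamma_pos_of_pos hα).le
  have hmem : ∀ s ∈ uIoc 0 t, s ∈ Icc 0 t := fun s hs => by
    rw [uIoc_of_le ht] at hs
    exact Ioc_subset_Icc_self hs
  refine intervalIntegral.hasSum_integral_of_dominated_convergence
    (fun i s => (t - s) ^ (α - 1) / Gamma α * u i)
    (fun i =>
      (intervalIntegrable_riemannLiouville_integrand hα ht (hF i)).def'.aestronglyMeasurable)
    (fun i => ae_of_all _ fun s hs => ?_) (ae_of_all _ fun s _ => hu.mul_left _) ?_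
    (ae_of_all _ fun s hs => ?_)
  · rw [norm_mul, Real.norm_of_nonneg (hk s hs), Real.norm_eq_abs]
    exact mul_le_mul_of_nonneg_left (hFu i s (hmem s hs)) (hk s hs)
  · simp_rw [tsum_mul_left]
    exact (intervalIntegrable_riemannLiouville_kernel hα t).mul_const _
  · have hsum := hu.of_norm_bounded (f := fun i => F i s) fun i => hFu i s (hmem s hs)
    exact hsum.hasSum.mul_left _

theorem eqOn_zero_of_eq_riemannLiouville (hα : 0 < α) (hα1 : α ≤ 1) {κ C T : ℝ} {d : ℝ → ℝ}
    (hC : ∀ t ∈ Icc 0 T, |d t| ≤ C)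
    (hd : ∀ t ∈ Icc 0 T, d t = riemannLiouville α (fun s => κ * d s) t) :
    EqOn d 0 (Icc 0 T) := by
  have hbound : ∀ n : ℕ, ∀ t ∈ Icc 0 T,
      |d t| ≤ C * |κ| ^ n * (t ^ (α * n) / Gamma (α * n + 1)) := by
    intro n
    induction n with
    | zero => simpa using hC
    | succ n ih =>
      intro t ht
      have hcont : ContinuousOn
          (fun s => |κ| * (C * |κ| ^ n * (s ^ (α * n) / Gamma (α * n + 1)))) (Icc 0 t) :=
        (((continuous_rpow_const (by positivity)).div_const _).const_mul _
          |>.const_mul _).continuousOn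
      rw [hd t ht]
      calc |riemannLiouville α (fun s => κ * d s) t|
          ≤ riemannLiouville α
              (fun s => |κ| * (C * |κ| ^ n * (s ^ (α * n) / Gamma (α * n + 1)))) t := by
            refine abs_riemannLiouville_le hα ht.1 hcont fun s hs => ?_
            rw [abs_mul]
            exact mul_le_mul_of_nonneg_left (ih s ⟨hs.1, hs.2.trans ht.2⟩) (abs_nonneg κ)
        _ = C * |κ| ^ (n + 1) * (t ^ (α * (n + 1 : ℕ)) / Gamma (α * (n + 1 : ℕ) + 1)) := by
            rw [riemannLiouville_const_mul, riemannLiouville_const_mul,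
              riemannLiouville_rpow_div_Gamma hα (by positivity) ht.1]
            push_cast
            ring_nf
  intro t ht
  have hlim : Tendsto (fun n : ℕ => C * |κ| ^ n * (t ^ (α * n) / Gamma (α * n + 1)))
      atTop (𝓝 0) := by
    simpa [mul_pow, ← rpow_mul_natCast ht.1, mul_assoc, mul_div_assoc] using
      ((summable_pow_div_Gamma hα hα1 (|κ| * t ^ α) 1).tendsto_atTop_zero).const_mul C
  exact abs_nonpos_iff.1 (ge_of_tendsto' hlim fun n => hbound n t ht)

theorem eqOn_of_eq_add_riemannLiouville (hα : 0 < α) (hα1 : α ≤ 1) {x₀ κ₁ κ₂ T : ℝ}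
    {m₁ m₂ : ℝ → ℝ} (hc₁ : ContinuousOn m₁ (Icc 0 T)) (hc₂ : ContinuousOn m₂ (Icc 0 T))
    (h₁ : ∀ t ∈ Icc 0 T, m₁ t = x₀ + riemannLiouville α (fun s => κ₁ + κ₂ * m₁ s) t)
    (h₂ : ∀ t ∈ Icc 0 T, m₂ t = x₀ + riemannLiouville α (fun s => κ₁ + κ₂ * m₂ s) t) :
    EqOn m₁ m₂ (Icc 0 T) := by
  obtain ⟨C, hC⟩ := isCompact_Icc.exists_bound_of_continuousOn (hc₁.sub hc₂)
  have hd : ∀ t ∈ Icc 0 T,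
      m₁ t - m₂ t = riemannLiouville α (fun s => κ₂ * (m₁ s - m₂ s)) t := by
    intro t ht
    have hcont : ∀ m : ℝ → ℝ, ContinuousOn m (Icc 0 T) →
        ContinuousOn (fun s => κ₁ + κ₂ * m s) (Icc 0 t) := fun m hm =>
      (continuousOn_const.add (continuousOn_const.mul hm)).mono (Icc_subset_Icc_right ht.2)
    rw [h₁ t ht, h₂ t ht, add_sub_add_left_eq_sub,
      ← riemannLiouville_sub hα ht.1 (hcont m₁ hc₁) (hcont m₂ hc₂)]
    simp only [add_sub_add_left_eq_sub, mul_sub]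
  exact fun t ht => sub_eq_zero.1 (eqOn_zero_of_eq_riemannLiouville hα hα1 hC hd ht)

end RiemannLiouville

noncomputable def meanTerm (α x₀ κ₁ κ₂ : ℝ) (i : ℕ) (t : ℝ) : ℝ :=
  κ₂ ^ i * (x₀ * t ^ (α * i) / Gamma (α * i + 1)
    + κ₁ * t ^ (α * (i + 1)) / Gamma (α * (i + 1) + 1))

section MeanTerm

variable {α : ℝ} (x₀ κ₁ κ₂ : ℝ) {t : ℝ}

theorem meanTerm_eq (hα : 0 < α) (ht : 0 ≤ t) (i : ℕ) :
    meanTerm α x₀ κ₁ κ₂ i t = x₀ * ((κ₂ * t ^ α) ^ i / Gamma (α * i + 1))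
      + κ₁ * t ^ α * ((κ₂ * t ^ α) ^ i / Gamma (α * i + (α + 1))) := by
  rw [meanTerm, mul_pow, ← rpow_mul_natCast ht, show α * ((i : ℝ) + 1) = α * i + α by ring,
    rpow_add' ht (by positivity), ← add_assoc]
  ring

theorem summable_meanTerm (hα : 0 < α) (hα1 : α ≤ 1) (ht : 0 ≤ t) :
    Summable fun i => meanTerm α x₀ κ₁ κ₂ i t := by
  simp only [meanTerm_eq x₀ κ₁ κ₂ hα ht]
  exact ((summable_pow_div_Gamma hα hα1 _ 1).mul_left x₀).add
    ((summable_pow_div_Gamma hα hα1 _ (α + 1)).mul_left _)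

theorem abs_meanTerm_le (hα : 0 < α) {R : ℝ} (ht : t ∈ Icc 0 R) (i : ℕ) :
    |meanTerm α x₀ κ₁ κ₂ i t| ≤ meanTerm α |x₀| |κ₁| |κ₂| i R := by
  have hΓ₁ : 0 < Gamma (α * i + 1) := Gamma_pos_of_pos (by positivity)
  have hΓ₂ : 0 < Gamma (α * (i + 1) + 1) := Gamma_pos_of_pos (by positivity)
  rw [meanTerm, meanTerm, abs_mul, abs_pow]
  refine mul_le_mul_of_nonneg_left ((abs_add_le _ _).trans (add_le_add ?_ ?_)) (by positivity)
  · rw [abs_div, abs_mul, abs_of_nonneg (rpow_nonneg ht.1 _), abs_of_pos hΓ₁]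
    gcongr
    exacts [ht.1, ht.2]
  · rw [abs_div, abs_mul, abs_of_nonneg (rpow_nonneg ht.1 _), abs_of_pos hΓ₂]
    gcongr
    exacts [ht.1, ht.2]

theorem continuous_meanTerm (hα : 0 < α) (i : ℕ) : Continuous (meanTerm α x₀ κ₁ κ₂ i) := by
  unfold meanTerm
  fun_prop (disch := positivity)

theorem continuousOn_tsum_meanTerm (hα : 0 < α) (hα1 : α ≤ 1) (R : ℝ) :
    ContinuousOn (fun t => ∑' i, meanTerm α x₀ κ₁ κ₂ i t) (Icc 0 R) := by
  rcases lt_or_ge R 0 with hR | hR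
  · simp [Icc_eq_empty_of_lt hR]
  exact continuousOn_tsum (fun i => (continuous_meanTerm x₀ κ₁ κ₂ hα i).continuousOn)
    (summable_meanTerm |x₀| |κ₁| |κ₂| hα hα1 hR) fun i t ht => abs_meanTerm_le x₀ κ₁ κ₂ hα ht i

theorem mul_riemannLiouville_meanTerm (hα : 0 < α) (ht : 0 ≤ t) (i : ℕ) :
    κ₂ * riemannLiouville α (meanTerm α x₀ κ₁ κ₂ i) t = meanTerm α x₀ κ₁ κ₂ (i + 1) t := by
  have hpow : ∀ c β : ℝ, 0 ≤ β → ContinuousOn (fun s => c * (s ^ β / Gamma (β + 1))) (Icc 0 t) :=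
    fun c β hβ => (((continuous_rpow_const hβ).div_const _).const_mul c).continuousOn
  have hfun : meanTerm α x₀ κ₁ κ₂ i = fun s => κ₂ ^ i * (x₀ * (s ^ (α * i) / Gamma (α * i + 1))
      + κ₁ * (s ^ (α * (i + 1)) / Gamma (α * (i + 1) + 1))) := by
    ext s
    simp only [meanTerm, mul_div_assoc]
  rw [hfun, riemannLiouville_const_mul,
    riemannLiouville_add hα ht (hpow x₀ _ (by positivity)) (hpow κ₁ _ (by positivity)),
    riemannLiouville_const_mul, riemannLiouville_const_mul,
    riemannLiouville_rpow_div_Gamma hα (by positivity) ht,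
    riemannLiouville_rpow_div_Gamma hα (by positivity) ht, meanTerm]
  push_cast
  ring_nf

theorem tsum_meanTerm_eq_add_riemannLiouville (hα : 0 < α) (hα1 : α ≤ 1) (ht : 0 ≤ t) :
    ∑' i, meanTerm α x₀ κ₁ κ₂ i t
      = x₀ + riemannLiouville α (fun s => κ₁ + κ₂ * ∑' i, meanTerm α x₀ κ₁ κ₂ i s) t := by
  have hshift : HasSum (fun i => meanTerm α x₀ κ₁ κ₂ (i + 1) t)
      (κ₂ * riemannLiouville α (fun s => ∑' i, meanTerm α x₀ κ₁ κ₂ i s) t) := by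
    simpa only [mul_riemannLiouville_meanTerm x₀ κ₁ κ₂ hα ht] using
      (hasSum_riemannLiouville hα ht (fun i => (continuous_meanTerm x₀ κ₁ κ₂ hα i).continuousOn)
        (summable_meanTerm |x₀| |κ₁| |κ₂| hα hα1 ht)
        fun i s hs => abs_meanTerm_le x₀ κ₁ κ₂ hα hs i).mul_left κ₂
  have hconst : riemannLiouville α (fun _ => κ₁) t = κ₁ * (t ^ α / Gamma (α + 1)) := by
    have h := riemannLiouville_rpow_div_Gamma hα le_rfl ht
    simp only [rpow_zero, zero_add, Gamma_one, div_one] at h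
    simpa [h] using riemannLiouville_const_mul (α := α) (f := fun _ => 1) (t := t) κ₁
  rw [riemannLiouville_add (f := fun _ => κ₁) (g := fun s => κ₂ * ∑' i, meanTerm α x₀ κ₁ κ₂ i s)
      hα ht continuousOn_const
      (continuousOn_const.mul (continuousOn_tsum_meanTerm x₀ κ₁ κ₂ hα hα1 t)),
    riemannLiouville_const_mul, hconst, (summable_meanTerm x₀ κ₁ κ₂ hα hα1 ht).tsum_eq_zero_add,
    hshift.tsum_eq]
  simp only [meanTerm, pow_zero, CharP.cast_eq_zero, mul_zero, rpow_zero, mul_one, zero_add,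
    Gamma_one, div_one, one_mul]
  ring

theorem tsum_meanTerm_eq_mittagLeffler (hα : 0 < α) (hα1 : α ≤ 1) (hκ : κ₂ ≠ 0) (ht : 0 ≤ t) :
    ∑' i, meanTerm α x₀ κ₁ κ₂ i t = x₀ * mittagLeffler α (κ₂ * t ^ α)
      + κ₁ / κ₂ * (mittagLeffler α (κ₂ * t ^ α) - 1) := by
  have hE : HasSum (fun i : ℕ => (κ₂ * t ^ α) ^ i / Gamma (α * i + 1))
      (mittagLeffler α (κ₂ * t ^ α)) := (summable_pow_div_Gamma hα hα1 _ 1).hasSum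
  have hE' : HasSum (fun i : ℕ => (κ₂ * t ^ α) ^ (i + 1) / Gamma (α * (i + 1 : ℕ) + 1))
      (mittagLeffler α (κ₂ * t ^ α) - 1) := by
    simpa using (hasSum_nat_add_iff' 1).2 hE
  rw [← ((hE.mul_left x₀).add (hE'.mul_left (κ₁ / κ₂))).tsum_eq]
  refine tsum_congr fun i => ?_
  rw [meanTerm_eq x₀ κ₁ κ₂ hα ht, pow_succ]
  push_cast
  rw [show α * ((i : ℝ) + 1) + 1 = α * i + (α + 1) by ring]
  field_simp

end MeanTerm

theorem stmt_4_general (α x₀ κ₁ κ₂ T : ℝ) (hα : 1 / 2 < α) (hα1 : α ≤ 1) (hκ : κ₂ ≠ 0)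
    (m : ℝ → ℝ) (hmc : ContinuousOn m (Set.Icc 0 T))
    (hm : ∀ t ∈ Set.Icc (0 : ℝ) T,
      m t = x₀ + ∫ s in (0 : ℝ)..t, (t - s) ^ (α - 1) / Real.Gamma α * (κ₁ + κ₂ * m s)) :
    ∀ t ∈ Set.Icc (0 : ℝ) T,
      m t = x₀ * mittagLeffler α (κ₂ * t ^ α)
              + κ₁ / κ₂ * (mittagLeffler α (κ₂ * t ^ α) - 1) ∧
      m t = ∑' i : ℕ, κ₂ ^ i * (x₀ * t ^ (α * i) / Real.Gamma (α * i + 1)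
              + κ₁ * t ^ (α * (i + 1)) / Real.Gamma (α * (i + 1) + 1)) := by
  have hα0 : 0 < α := by linarith
  have hmean : EqOn m (fun t => ∑' i, meanTerm α x₀ κ₁ κ₂ i t) (Icc 0 T) :=
    eqOn_of_eq_add_riemannLiouville hα0 hα1 hmc (continuousOn_tsum_meanTerm x₀ κ₁ κ₂ hα0 hα1 T) hm
      fun t ht => tsum_meanTerm_eq_add_riemannLiouville x₀ κ₁ κ₂ hα0 hα1 ht.1
  intro t ht
  rw [hmean ht]
  exact ⟨tsum_meanTerm_eq_mittagLeffler x₀ κ₁ κ₂ hα0 hα1 hκ ht.1, rfl⟩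

/-- The mean `m(t) = E[X_t]` of the Volterra Ornstein-Uhlenbeck process, characterized as the
(unique, continuous) solution of the fractional linear integral equation
`m(t) = x₀ + ∫_0^t ((t-s)^(α-1)/Γ(α))(κ₁ + κ₂ m(s)) ds`, is given by
`m(t) = x₀ E_α(κ₂ t^α) + (κ₁/κ₂)(E_α(κ₂ t^α) - 1)` and equivalently by the series
`∑_{i≥0} κ₂^i (x₀ t^(αi)/Γ(αi+1) + κ₁ t^(α(i+1))/Γ(α(i+1)+1))`. -/
theorem stmt_4 (α x₀ κ₁ κ₂ T : ℝ) (hα : 1 / 2 < α) (hα1 : α ≤ 1) (hκ : κ₂ ≠ 0) (hT : 0 < T)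
    (m : ℝ → ℝ) (hmc : ContinuousOn m (Set.Icc 0 T))
    (hm : ∀ t ∈ Set.Icc (0 : ℝ) T,
      m t = x₀ + ∫ s in (0 : ℝ)..t, (t - s) ^ (α - 1) / Real.Gamma α * (κ₁ + κ₂ * m s)) :
    ∀ t ∈ Set.Icc (0 : ℝ) T,
      m t = x₀ * mittagLeffler α (κ₂ * t ^ α)
              + κ₁ / κ₂ * (mittagLeffler α (κ₂ * t ^ α) - 1) ∧
      m t = ∑' i : ℕ, κ₂ ^ i * (x₀ * t ^ (α * i) / Real.Gamma (α * i + 1)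
              + κ₁ * t ^ (α * (i + 1)) / Real.Gamma (α * (i + 1) + 1)) :=
  stmt_4_general α x₀ κ₁ κ₂ T hα hα1 hκ m hmc hm
end

section
/- Let α ∈ (1/2,1], κ_2 ∈ ℝ, T > 0. The series of functions Y_n(T) = ∑_{i=1}^n κ_2^{i−1} ∫_0^T ((T−s)^(iα−1)/Γ(iα)) dW_s converges in L^2(Ω) as n → ∞, and the L^2 norm of the i-th summand equals |κ_2|^(i−1) T^(iα−1/2)/((2iα−1)^(1/2) Γ(iα)), which is summable over i. -/
/-!
The norm of an element of `L²(μ)` is the square root of its second moment, so the isometry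
hypothesis gives the norm of each summand in closed form. These norms are dominated by a
multiple of `(|κ₂| T^α)^i / Γ(α i + α)`, the terms of a Mittag-Leffler series; that series
converges by a ratio test over `k` steps with `k α ≥ 1`, since
`Γ(c + k α) ≥ Γ(c + 1) = c Γ(c)` for `c ≥ 2`. Absolute convergence in the complete space
`L²(μ)` then yields the limit.
-/

open MeasureTheory Filter

theorem summable_of_ratio_norm_add_eventually_le {E : Type*} [NormedAddCommGroup E]
    [CompleteSpace E] {f : ℕ → E} {r : ℝ} (hr : r < 1) {k : ℕ} (hk : k ≠ 0)
    (h : ∀ᶠ n in atTop, ‖f (n + k)‖ ≤ r * ‖f n‖) : Summable f := by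
  have : NeZero k := ⟨hk⟩
  rw [Finset.sum_indicator_mod k f, Finset.sum_fn]
  refine summable_sum fun a _ => ?_
  rw [← ZMod.natCast_zmod_val a, summable_indicator_mod_iff_summable]
  have hres : Tendsto (fun n => k * n + a.val) atTop atTop :=
    tendsto_atTop_mono (fun n => le_add_right (Nat.le_mul_of_pos_left n (Nat.pos_of_ne_zero hk)))
      tendsto_id
  refine summable_of_ratio_norm_eventually_le hr ((hres.eventually h).mono fun n hn => ?_)
  rwa [show k * (n + 1) + a.val = k * n + a.val + k by ring]

theorem Real.mul_Gamma_le_Gamma_add {c δ : ℝ} (hc : 2 ≤ c) (hδ : 1 ≤ δ) :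
    c * Real.Gamma c ≤ Real.Gamma (c + δ) := by
  rw [← Real.Gamma_add_one (by positivity)]
  exact Real.Gamma_strictMonoOn_Ici.monotoneOn (by simp; linarith) (by simp; linarith)
    (by linarith)

theorem summable_pow_div_Gamma_mul_add {α β : ℝ} (hα : 0 < α) (hβ : 0 < β) (x : ℝ) :
    Summable fun n : ℕ => x ^ n / Real.Gamma (α * n + β) := by
  obtain ⟨k, hk⟩ : ∃ k : ℕ, 1 ≤ k * α := by
    obtain ⟨k, hk⟩ := exists_nat_ge α⁻¹
    exact ⟨k, by rwa [← inv_le_iff_one_le_mul₀ hα]⟩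
  have hk0 : k ≠ 0 := by rintro rfl; simp at hk; linarith
  refine summable_of_ratio_norm_add_eventually_le (r := 1 / 2) (by norm_num) hk0 ?_
  have hc : Tendsto (fun n : ℕ => α * n + β) atTop atTop :=
    tendsto_atTop_add_const_right _ _ (tendsto_natCast_atTop_atTop.const_mul_atTop hα)
  filter_upwards [hc.eventually_ge_atTop 2, hc.eventually_ge_atTop (2 * |x| ^ k)] with n h2 hx
  set c := α * n + β
  have hΓ : 0 < Real.Gamma c := Real.Gamma_pos_of_pos (by linarith)
  have hshift : α * ↑(n + k) + β = c + k * α := by push_cast; ring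
  rw [hshift, norm_div, norm_div, norm_pow, norm_pow, pow_add, Real.norm_eq_abs,
    Real.norm_of_nonneg (Real.Gamma_pos_of_pos (by positivity)).le, Real.norm_of_nonneg hΓ.le]
  calc |x| ^ n * |x| ^ k / Real.Gamma (c + k * α)
      ≤ |x| ^ n * |x| ^ k / (c * Real.Gamma c) := by
        gcongr; exact Real.mul_Gamma_le_Gamma_add h2 hk
    _ = |x| ^ n / Real.Gamma c * (|x| ^ k / c) := by field_simp
    _ ≤ |x| ^ n / Real.Gamma c * (1 / 2) := by
        refine mul_le_mul_of_nonneg_left ?_ (by positivity)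
        rw [div_le_iff₀ (by linarith)]; linarith
    _ = 1 / 2 * (|x| ^ n / Real.Gamma c) := mul_comm _ _

theorem summable_pow_mul_rpow_div_sqrt_mul_Gamma {α T : ℝ} (hα : 1 / 2 < α) (hT : 0 ≤ T)
    (x : ℝ) :
    Summable fun i : ℕ => x ^ i * T ^ (((i : ℝ) + 1) * α - 1 / 2)
        / (√(2 * ((i : ℝ) + 1) * α - 1) * Real.Gamma (((i : ℝ) + 1) * α)) := by
  have hα0 : 0 < α := by linarith
  have hsqrt : 0 < √(2 * α - 1) := Real.sqrt_pos.mpr (by linarith)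
  refine Summable.of_norm_bounded
    ((summable_pow_div_Gamma_mul_add hα0 hα0 (|x| * T ^ α)).mul_left
      (T ^ (α - 1 / 2) / √(2 * α - 1))) fun i => ?_
  have hi : (0 : ℝ) ≤ i := i.cast_nonneg
  have hΓ : 0 < Real.Gamma (((i : ℝ) + 1) * α) := Real.Gamma_pos_of_pos (by positivity)
  have hexp : T ^ (((i : ℝ) + 1) * α - 1 / 2) = T ^ (α - 1 / 2) * (T ^ α) ^ i := by
    rw [← Real.rpow_natCast, ← Real.rpow_mul hT, ← Real.rpow_add' hT (by nlinarith)]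
    ring_nf
  rw [norm_div, norm_mul, norm_mul, norm_pow, Real.norm_eq_abs, hexp, mul_pow,
    Real.norm_of_nonneg (by positivity), Real.norm_of_nonneg (Real.sqrt_nonneg _),
    Real.norm_of_nonneg hΓ.le,
    show α * (i : ℝ) + α = ((i : ℝ) + 1) * α by ring]
  calc |x| ^ i * (T ^ (α - 1 / 2) * (T ^ α) ^ i)
        / (√(2 * ((i : ℝ) + 1) * α - 1) * Real.Gamma (((i : ℝ) + 1) * α))
      ≤ |x| ^ i * (T ^ (α - 1 / 2) * (T ^ α) ^ i)
        / (√(2 * α - 1) * Real.Gamma (((i : ℝ) + 1) * α)) := by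
        gcongr; nlinarith
    _ = _ := by field_simp

theorem MeasureTheory.Lp.norm_eq_sqrt_integral_sq {Ω : Type*} [MeasurableSpace Ω]
    {μ : Measure Ω} (f : Lp ℝ 2 μ) : ‖f‖ = √(∫ ω, f ω ^ 2 ∂μ) := by
  rw [← Real.sqrt_sq (norm_nonneg f), ← real_inner_self_eq_norm_sq, L2.inner_def]
  simp only [RCLike.inner_apply, conj_trivial, sq]

theorem Real.sqrt_rpow_div_mul_Gamma_sq {T c : ℝ} (hT : 0 ≤ T) (hc : 1 / 2 ≤ c) :
    √(T ^ (2 * c - 1) / ((2 * c - 1) * Real.Gamma c ^ 2))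
      = T ^ (c - 1 / 2) / (√(2 * c - 1) * Real.Gamma c) := by
  rw [Real.sqrt_div' _ (mul_nonneg (by linarith) (sq_nonneg _)), Real.sqrt_mul (by linarith),
    Real.sqrt_sq (Real.Gamma_pos_of_pos (by linarith)).le, Real.sqrt_eq_rpow,
    ← Real.rpow_mul hT]
  ring_nf

theorem Finset.sum_Icc_one_eq_sum_range {M : Type*} [AddCommMonoid M] (g : ℕ → M) (n : ℕ) :
    ∑ i ∈ Finset.Icc 1 n, g i = ∑ j ∈ Finset.range n, g (j + 1) := by
  rw [Finset.range_eq_Ico, Finset.sum_Ico_add', ← Finset.Ico_add_one_right_eq_Icc]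

theorem stmt_6_general {Ω : Type*} [MeasurableSpace Ω] (μ : Measure Ω)
    (α κ₂ T : ℝ) (hα : 1 / 2 < α) (hT : 0 < T)
    (ξ : ℕ → Lp ℝ 2 μ)
    (hiso : ∀ i : ℕ, 1 ≤ i → ∫ ω, (ξ i ω) ^ 2 ∂μ
      = T ^ (2 * (i : ℝ) * α - 1) / ((2 * (i : ℝ) * α - 1) * Real.Gamma ((i : ℝ) * α) ^ 2)) :
    (∀ i : ℕ, 1 ≤ i → ‖κ₂ ^ (i - 1) • ξ i‖
        = |κ₂| ^ (i - 1) * T ^ ((i : ℝ) * α - 1 / 2)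
            / (Real.sqrt (2 * (i : ℝ) * α - 1) * Real.Gamma ((i : ℝ) * α))) ∧
    (Summable fun i : ℕ => |κ₂| ^ i * T ^ (((i : ℝ) + 1) * α - 1 / 2)
        / (Real.sqrt (2 * ((i : ℝ) + 1) * α - 1) * Real.Gamma (((i : ℝ) + 1) * α))) ∧
    ∃ Y : Lp ℝ 2 μ,
      Tendsto (fun n => ∑ i ∈ Finset.Icc 1 n, κ₂ ^ (i - 1) • ξ i) atTop (nhds Y) := by
  have hnorm : ∀ i : ℕ, 1 ≤ i → ‖κ₂ ^ (i - 1) • ξ i‖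
      = |κ₂| ^ (i - 1) * T ^ ((i : ℝ) * α - 1 / 2)
          / (√(2 * (i : ℝ) * α - 1) * Real.Gamma ((i : ℝ) * α)) := by
    intro i hi
    have hc : 1 / 2 ≤ (i : ℝ) * α := by
      nlinarith [show (1 : ℝ) ≤ i by exact_mod_cast hi]
    rw [norm_smul, norm_pow, Real.norm_eq_abs, Lp.norm_eq_sqrt_integral_sq, hiso i hi,
      mul_assoc 2, Real.sqrt_rpow_div_mul_Gamma_sq hT.le hc, mul_div_assoc]
  have hsum := summable_pow_mul_rpow_div_sqrt_mul_Gamma hα hT.le |κ₂|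
  obtain ⟨Y, hY⟩ : Summable fun j : ℕ => κ₂ ^ j • ξ (j + 1) :=
    .of_norm (hsum.congr fun j => by simpa using (hnorm (j + 1) j.succ_pos).symm)
  refine ⟨hnorm, hsum, Y, ?_⟩
  simpa only [Finset.sum_Icc_one_eq_sum_range, Nat.add_sub_cancel] using hY.tendsto_sum_nat

/-- L² convergence of the Wiener integral series. Here `ξ i` stands for the Wiener integral
`∫_0^T ((T-s)^(iα-1)/Γ(iα)) dW_s`, encoded (via the Itô isometry) by the hypothesis on its
second moment. The L² norm of the `i`-th summand `κ₂^(i-1) • ξ i` equals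
`|κ₂|^(i-1) T^(iα-1/2) / ((2iα-1)^(1/2) Γ(iα))`, this is summable over `i`, and the partial
sums converge in `L²(Ω)`. -/
theorem stmt_6 {Ω : Type*} [MeasurableSpace Ω] (μ : Measure Ω) [IsProbabilityMeasure μ]
    (α κ₂ T : ℝ) (hα : 1 / 2 < α) (hα1 : α ≤ 1) (hT : 0 < T)
    (ξ : ℕ → Lp ℝ 2 μ)
    (hiso : ∀ i : ℕ, 1 ≤ i → ∫ ω, (ξ i ω) ^ 2 ∂μ
      = T ^ (2 * (i : ℝ) * α - 1) / ((2 * (i : ℝ) * α - 1) * Real.Gamma ((i : ℝ) * α) ^ 2)) :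
    (∀ i : ℕ, 1 ≤ i → ‖κ₂ ^ (i - 1) • ξ i‖
        = |κ₂| ^ (i - 1) * T ^ ((i : ℝ) * α - 1 / 2)
            / (Real.sqrt (2 * (i : ℝ) * α - 1) * Real.Gamma ((i : ℝ) * α))) ∧
    (Summable fun i : ℕ => |κ₂| ^ i * T ^ (((i : ℝ) + 1) * α - 1 / 2)
        / (Real.sqrt (2 * ((i : ℝ) + 1) * α - 1) * Real.Gamma (((i : ℝ) + 1) * α))) ∧
    ∃ Y : Lp ℝ 2 μ,
      Tendsto (fun n => ∑ i ∈ Finset.Icc 1 n, κ₂ ^ (i - 1) • ξ i) atTop (nhds Y) :=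
  stmt_6_general μ α κ₂ T hα hT ξ hiso
end

section
/- Let (a_k)_{k=1}^n be nonnegative reals satisfying, for constants M ≥ 0, λ ≥ 0, α ∈ (0,1), a_k ≤ M + λ (T/n)^α ∑_{j=1}^{k−1} a_j (k−j)^(α−1) for all 1 ≤ k ≤ n. Then there exists a constant C depending only on λ, T, α (not on n or M) such that max_{1≤k≤n} a_k ≤ C·M. -/
/-!
Weight the sequence by `exp (s k)` with `s = μ T / n`: if `a j ≤ 2 M exp (s j)` for `j < k`, the
recursion gives `a k ≤ M + 2 M exp (s k) · λ h^α ∑_{l ≥ 1} exp (-s l) l^(α-1)` with `h = T / n`.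
Since `x ↦ exp (-x) x^(α-1)` is decreasing, the last sum is a lower Riemann sum of the Gamma
integral, so `λ h^α ∑ ≤ λ Γ(α) / μ^α`, which is `1/2` for `μ^α = 2 λ Γ(α)`. Hence
`a k ≤ 2 M exp (s k) ≤ 2 exp (μ T) M`, uniformly in `n`.
-/

open Real Finset MeasureTheory intervalIntegral

theorem AntitoneOn.sum_mul_le_integral_of_Ioi {f : ℝ → ℝ} {x₀ s : ℝ} (hs : 0 ≤ s) (m : ℕ)
    (hf : AntitoneOn f (Set.Ioi x₀)) (hint : IntegrableOn f (Set.Ioc x₀ (x₀ + s * m))) :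
    ∑ i ∈ range m, s * f (x₀ + s * (i + 1)) ≤ ∫ x in x₀..x₀ + s * m, f x := by
  set x : ℕ → ℝ := fun i => x₀ + s * i
  have hx₀_le : ∀ i : ℕ, x₀ ≤ x i := fun i => le_add_of_nonneg_right (by positivity)
  have hx_le : ∀ i : ℕ, x i ≤ x (i + 1) := fun i => by simp only [x]; push_cast; nlinarith
  have hpiece : ∀ i < m, IntervalIntegrable f volume (x i) (x (i + 1)) := fun i hi => by
    rw [intervalIntegrable_iff_integrableOn_Ioc_of_le (hx_le i)]
    refine hint.mono_set (Set.Ioc_subset_Ioc (hx₀_le i) ?_)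
    have : ((i + 1 : ℕ) : ℝ) ≤ m := by exact_mod_cast hi
    simp only [x]; nlinarith
  calc ∑ i ∈ range m, s * f (x₀ + s * (i + 1))
      = ∑ i ∈ range m, ∫ _ in x i..x (i + 1), f (x (i + 1)) := by
        refine sum_congr rfl fun i _ => ?_
        simp only [x, intervalIntegral.integral_const, smul_eq_mul]; push_cast; ring_nf
    _ ≤ ∑ i ∈ range m, ∫ y in x i..x (i + 1), f y := by
        refine sum_le_sum fun i hi => integral_mono_on_of_le_Ioo (hx_le i)
          intervalIntegrable_const (hpiece i (mem_range.1 hi)) fun y hy => ?_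
        have hy₀ : x₀ < y := (hx₀_le i).trans_lt hy.1
        exact hf (Set.mem_Ioi.2 hy₀) (Set.mem_Ioi.2 (hy₀.trans hy.2)) hy.2.le
    _ = ∫ y in x₀..x₀ + s * m, f y := by
        rw [sum_integral_adjacent_intervals hpiece]; simp [x]

theorem Real.antitoneOn_exp_neg_mul_rpow {α : ℝ} (hα : α ≤ 1) :
    AntitoneOn (fun x : ℝ => exp (-x) * x ^ (α - 1)) (Set.Ioi 0) := fun x hx y hy hxy =>
  mul_le_mul (exp_le_exp.2 (neg_le_neg hxy)) (rpow_le_rpow_of_nonpos hx hxy (by linarith))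
    (rpow_nonneg (le_of_lt hy) _) (exp_pos _).le

theorem Real.rpow_mul_sum_exp_neg_mul_rpow_le_Gamma {α s : ℝ} (hα₀ : 0 < α) (hα₁ : α ≤ 1)
    (hs : 0 ≤ s) (k : ℕ) :
    s ^ α * ∑ l ∈ Ico 1 k, exp (-(s * l)) * (l : ℝ) ^ (α - 1) ≤ Gamma α := by
  set g : ℝ → ℝ := fun x => exp (-x) * x ^ (α - 1)
  have hg : IntegrableOn g (Set.Ioi 0) := GammaIntegral_convergent hα₀
  have hterm : ∀ l : ℕ, s ^ α * (exp (-(s * l)) * (l : ℝ) ^ (α - 1)) = s * g (s * l) := by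
    intro l
    have hsα : s ^ α = s * s ^ (α - 1) := by
      rw [mul_comm, ← rpow_add_one' hs (by linarith), sub_add_cancel]
    simp only [g, mul_rpow hs l.cast_nonneg, hsα]; ring
  calc s ^ α * ∑ l ∈ Ico 1 k, exp (-(s * l)) * (l : ℝ) ^ (α - 1)
      = ∑ i ∈ range (k - 1), s * g (0 + s * (i + 1)) := by
        rw [mul_sum, sum_Ico_eq_sum_range]
        refine sum_congr rfl fun i _ => ?_
        rw [hterm]; push_cast; ring_nf
    _ ≤ ∫ x in (0 : ℝ)..0 + s * (k - 1 : ℕ), g x :=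
        (antitoneOn_exp_neg_mul_rpow hα₁).sum_mul_le_integral_of_Ioi hs _
          (hg.mono_set Set.Ioc_subset_Ioi_self)
    _ ≤ ∫ x in Set.Ioi 0, g x := by
        rw [integral_of_le (by positivity)]
        refine setIntegral_mono_set hg ?_ Set.Ioc_subset_Ioi_self.eventuallyLE
        filter_upwards [ae_restrict_mem measurableSet_Ioi] with x hx
        exact mul_nonneg (exp_pos _).le (rpow_nonneg (le_of_lt hx) _)
    _ = Gamma α := (Gamma_eq_integral hα₀).symm

theorem le_two_mul_exp_of_le_add_sum_mul_sub {a K : ℕ → ℝ} {M s : ℝ} {n : ℕ}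
    (hM : 0 ≤ M) (hs : 0 ≤ s) (hK : ∀ l, 0 ≤ K l)
    (hKs : ∀ k ≤ n, ∑ l ∈ Ico 1 k, exp (-(s * l)) * K l ≤ 1 / 2)
    (ha : ∀ k, 1 ≤ k → k ≤ n → a k ≤ M + ∑ j ∈ Ico 1 k, a j * K (k - j)) :
    ∀ k, 1 ≤ k → k ≤ n → a k ≤ 2 * M * exp (s * k) := by
  intro k
  induction k using Nat.strong_induction_on with
  | _ k ih =>
  intro hk₁ hkn
  have hweight : ∀ j ∈ Ico 1 k, exp (s * j) = exp (s * k) * exp (-(s * (k - j : ℕ))) := by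
    intro j hj
    rw [← exp_add, Nat.cast_sub (mem_Ico.1 hj).2.le]; ring_nf
  have hreflect : ∑ j ∈ Ico 1 k, exp (-(s * (k - j : ℕ))) * K (k - j) =
      ∑ l ∈ Ico 1 k, exp (-(s * l)) * K l := by
    rw [sum_Ico_reflect (fun l => exp (-(s * l)) * K l) 1 (Nat.le_succ k)]; simp
  have hexp : 1 ≤ exp (s * k) := one_le_exp (by positivity)
  calc a k ≤ M + ∑ j ∈ Ico 1 k, a j * K (k - j) := ha k hk₁ hkn
    _ ≤ M + ∑ j ∈ Ico 1 k, 2 * M * exp (s * j) * K (k - j) := by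
        gcongr with j hj
        · exact hK _
        · exact ih j (mem_Ico.1 hj).2 (mem_Ico.1 hj).1 (by linarith [(mem_Ico.1 hj).2])
    _ = M + 2 * M * exp (s * k) * ∑ l ∈ Ico 1 k, exp (-(s * l)) * K l := by
        rw [← hreflect, mul_sum]
        refine congrArg (M + ·) (sum_congr rfl fun j hj => ?_)
        rw [hweight j hj]; ring
    _ ≤ M + 2 * M * exp (s * k) * (1 / 2) := by gcongr; exact hKs k hkn
    _ ≤ 2 * M * exp (s * k) := by nlinarith

theorem Real.sum_exp_neg_mul_mul_rpow_le_half {lam h α : ℝ} (hlam : 0 ≤ lam) (hh : 0 ≤ h)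
    (hα₀ : 0 < α) (hα₁ : α ≤ 1) (k : ℕ) :
    ∑ l ∈ Ico 1 k, exp (-((2 * lam * Gamma α) ^ α⁻¹ * h * l)) * (lam * h ^ α * (l : ℝ) ^ (α - 1))
      ≤ 1 / 2 := by
  have hΓ : 0 < Gamma α := Gamma_pos_of_pos hα₀
  set μ := (2 * lam * Gamma α) ^ α⁻¹
  have hμα : μ ^ α = 2 * lam * Gamma α := rpow_inv_rpow (by positivity) hα₀.ne'
  have hΓ_bound := rpow_mul_sum_exp_neg_mul_rpow_le_Gamma hα₀ hα₁ (by positivity : 0 ≤ μ * h) k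
  rw [mul_rpow (by positivity) hh, hμα] at hΓ_bound
  simp only [mul_left_comm _ (lam * h ^ α), ← mul_sum]
  nlinarith

/-- Discrete Grönwall inequality with weakly singular kernel: if nonnegative `a_k` satisfy
`a_k ≤ M + λ (T/n)^α ∑_{j=1}^{k-1} a_j (k-j)^(α-1)` for `1 ≤ k ≤ n`, then
`max_{1≤k≤n} a_k ≤ C M` with `C` depending only on `λ, T, α`. -/
theorem stmt_9 (lam T α : ℝ) (hlam : 0 ≤ lam) (hT : 0 < T) (hα : α ∈ Set.Ioo (0 : ℝ) 1) :
    ∃ C : ℝ, 0 < C ∧ ∀ n : ℕ, 1 ≤ n → ∀ M : ℝ, 0 ≤ M → ∀ a : ℕ → ℝ,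
      (∀ k : ℕ, 1 ≤ k → k ≤ n → 0 ≤ a k) →
      (∀ k : ℕ, 1 ≤ k → k ≤ n →
        a k ≤ M + lam * (T / n) ^ α * ∑ j ∈ Finset.Ico 1 k, a j * ((k : ℝ) - j) ^ (α - 1)) →
      ∀ k : ℕ, 1 ≤ k → k ≤ n → a k ≤ C * M := by
  obtain ⟨hα₀, hα₁⟩ := hα
  set μ := (2 * lam * Gamma α) ^ α⁻¹
  refine ⟨2 * exp (μ * T), by positivity, fun n hn M hM a _ hrec k hk₁ hkn => ?_⟩
  set h := T / n
  have hrec' : ∀ k, 1 ≤ k → k ≤ n →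
      a k ≤ M + ∑ j ∈ Ico 1 k, a j * (lam * h ^ α * ((k - j : ℕ) : ℝ) ^ (α - 1)) := by
    intro k hk₁ hkn
    refine (hrec k hk₁ hkn).trans_eq (congrArg (M + ·) ?_)
    rw [mul_sum]
    exact sum_congr rfl fun j hj => by rw [Nat.cast_sub (mem_Ico.1 hj).2.le]; ring
  have hhk : h * k ≤ T := by
    rw [div_mul_eq_mul_div, div_le_iff₀ (by positivity)]
    exact mul_le_mul_of_nonneg_left (by exact_mod_cast hkn) hT.le
  calc a k ≤ 2 * M * exp (μ * h * k) :=
        le_two_mul_exp_of_le_add_sum_mul_sub hM (by positivity) (fun _ => by positivity)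
          (fun k _ => sum_exp_neg_mul_mul_rpow_le_half hlam (by positivity) hα₀ hα₁.le k)
          hrec' k hk₁ hkn
    _ ≤ 2 * M * exp (μ * T) := by
        gcongr 2 * M * exp ?_
        rw [mul_assoc]; gcongr
    _ = 2 * exp (μ * T) * M := by ring
end

section
/- Let α ∈ (1/2,2/3), T > 0. There exists C such that for all 0 < r_j < r_{j−1} ≤ T, ∫_0^{r_j} (r_j − r)^{2α−2} (r_{j−1} − r)^{α−1} dr ≤ C (r_{j−1} − r_j)^{3α−2}. -/
/-!
After the substitution `s = r_j - r` the integral becomes `∫₀^{r_j} s^p (s + δ)^q ds` with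
`p = 2α - 2`, `q = α - 1` and `δ = r_{j-1} - r_j`. On `[0, δ]` bound `(s + δ)^q ≤ δ^q`, on
`[δ, ∞)` bound `(s + δ)^q ≤ s^q`; since `p > -1` and `p + q < -1` both pieces are `O(δ^{p+q+1})`.
-/

open MeasureTheory

lemma integral_sub_rpow_mul_sub_rpow_eq (b c p q : ℝ) :
    (∫ r in (0 : ℝ)..b, (b - r) ^ p * (c - r) ^ q) =
      ∫ s in (0 : ℝ)..b, s ^ p * (s + (c - b)) ^ q := by
  have h := intervalIntegral.integral_comp_sub_left
    (fun s : ℝ => s ^ p * (s + (c - b)) ^ q) (a := 0) (b := b) b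
  simp only [sub_self, sub_zero, sub_add_sub_cancel'] at h
  exact h

section SingularConvolution

variable {p q δ : ℝ}

lemma intervalIntegrable_rpow_mul_rpow_add (hp : -1 < p) (hδ : 0 < δ) {a b : ℝ}
    (ha : 0 ≤ a) (hb : 0 ≤ b) :
    IntervalIntegrable (fun s : ℝ => s ^ p * (s + δ) ^ q) volume a b := by
  refine (intervalIntegral.intervalIntegrable_rpow' hp).mul_continuousOn ?_
  refine ContinuousOn.rpow_const (by fun_prop) fun s hs => Or.inl ?_
  have : 0 ≤ s := le_trans (le_min ha hb) hs.1
  positivity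

lemma integral_rpow_mul_rpow_add_le_of_le (hp : -1 < p) (hq : q ≤ 0) (hδ : 0 < δ) {m : ℝ}
    (hm₀ : 0 ≤ m) (hmδ : m ≤ δ) :
    (∫ s in (0 : ℝ)..m, s ^ p * (s + δ) ^ q) ≤ δ ^ (p + q + 1) / (p + 1) := by
  have hp1 : 0 < p + 1 := by linarith
  calc (∫ s in (0 : ℝ)..m, s ^ p * (s + δ) ^ q)
      ≤ ∫ s in (0 : ℝ)..m, s ^ p * δ ^ q := by
        refine intervalIntegral.integral_mono_on_of_le_Ioo hm₀
          (intervalIntegrable_rpow_mul_rpow_add hp hδ le_rfl hm₀)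
          ((intervalIntegral.intervalIntegrable_rpow' hp).mul_const _) fun s hs => ?_
        have hs₀ : 0 < s := hs.1
        exact mul_le_mul_of_nonneg_left
          (Real.rpow_le_rpow_of_nonpos hδ (by linarith) hq) (by positivity)
    _ = m ^ (p + 1) / (p + 1) * δ ^ q := by
        rw [intervalIntegral.integral_mul_const, integral_rpow (Or.inl hp),
          Real.zero_rpow hp1.ne']
        ring
    _ ≤ δ ^ (p + 1) / (p + 1) * δ ^ q := by gcongr
    _ = δ ^ (p + q + 1) / (p + 1) := by
        rw [div_mul_eq_mul_div, ← Real.rpow_add hδ]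
        ring_nf

lemma integral_rpow_mul_rpow_add_le_of_ge (hq : q ≤ 0) (hpq : p + q < -1) (hδ : 0 < δ)
    {x : ℝ} (hδx : δ ≤ x) :
    (∫ s in δ..x, s ^ p * (s + δ) ^ q) ≤ δ ^ (p + q + 1) / -(p + q + 1) := by
  have hpq1 : p + q + 1 ≠ 0 := by linarith
  have hpos : ∀ s ∈ Set.uIcc δ x, 0 < s := fun s hs =>
    hδ.trans_le (Set.uIcc_of_le hδx ▸ hs).1
  have h0 : (0 : ℝ) ∉ Set.uIcc δ x := fun h => (hpos 0 h).false
  have hint : IntervalIntegrable (fun s : ℝ => s ^ p * (s + δ) ^ q) volume δ x := by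
    refine ContinuousOn.intervalIntegrable fun s hs => ContinuousAt.continuousWithinAt ?_
    have hs₀ := hpos s hs
    exact (continuousAt_id.rpow_const (Or.inl hs₀.ne')).mul
      ((continuousAt_id.add continuousAt_const).rpow_const (Or.inl (add_pos hs₀ hδ).ne'))
  calc (∫ s in δ..x, s ^ p * (s + δ) ^ q)
      ≤ ∫ s in δ..x, s ^ (p + q) := by
        refine intervalIntegral.integral_mono_on_of_le_Ioo hδx hint
          (intervalIntegral.intervalIntegrable_rpow (Or.inr h0)) fun s hs => ?_
        have hs₀ : 0 < s := hδ.trans hs.1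
        rw [Real.rpow_add hs₀]
        exact mul_le_mul_of_nonneg_left
          (Real.rpow_le_rpow_of_nonpos hs₀ (by linarith) hq) (by positivity)
    _ = (x ^ (p + q + 1) - δ ^ (p + q + 1)) / (p + q + 1) :=
        integral_rpow (Or.inr ⟨fun h => hpq1 (by linarith), h0⟩)
    _ ≤ δ ^ (p + q + 1) / -(p + q + 1) := by
        have hx : 0 ≤ x ^ (p + q + 1) := Real.rpow_nonneg (hδ.le.trans hδx) _
        rw [div_neg, ← neg_div]
        exact div_le_div_of_nonpos_of_le (by linarith) (by linarith)

theorem integral_rpow_mul_rpow_add_le (hp : -1 < p) (hpq : p + q < -1) (hδ : 0 < δ) {x : ℝ}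
    (hx : 0 ≤ x) :
    (∫ s in (0 : ℝ)..x, s ^ p * (s + δ) ^ q) ≤
      (1 / (p + 1) + 1 / -(p + q + 1)) * δ ^ (p + q + 1) := by
  have hq : q ≤ 0 := by linarith
  have hnear : 0 ≤ δ ^ (p + q + 1) / (p + 1) := by
    have : 0 < p + 1 := by linarith
    positivity
  have hfar : 0 ≤ δ ^ (p + q + 1) / -(p + q + 1) := by
    have : 0 < -(p + q + 1) := by linarith
    positivity
  rw [add_mul, one_div_mul_eq_div, one_div_mul_eq_div]
  rcases le_total x δ with hxδ | hδx
  · linarith [integral_rpow_mul_rpow_add_le_of_le hp hq hδ hx hxδ]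
  · rw [← intervalIntegral.integral_add_adjacent_intervals
      (intervalIntegrable_rpow_mul_rpow_add hp hδ le_rfl hδ.le)
      (intervalIntegrable_rpow_mul_rpow_add hp hδ hδ.le hx)]
    exact add_le_add (integral_rpow_mul_rpow_add_le_of_le hp hq hδ hδ.le le_rfl)
      (integral_rpow_mul_rpow_add_le_of_ge hq hpq hδ hδx)

end SingularConvolution

theorem stmt_15_general (α T : ℝ) (hα : α ∈ Set.Ioo (1 / 2 : ℝ) (2 / 3)) :
    ∃ C : ℝ, ∀ rj rj1 : ℝ, 0 < rj → rj < rj1 → rj1 ≤ T →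
      (∫ r in (0 : ℝ)..rj, (rj - r) ^ (2 * α - 2) * (rj1 - r) ^ (α - 1))
        ≤ C * (rj1 - rj) ^ (3 * α - 2) := by
  obtain ⟨hα₁, hα₂⟩ := hα
  refine ⟨1 / (2 * α - 2 + 1) + 1 / -(2 * α - 2 + (α - 1) + 1),
    fun rj rj1 hrj hlt _ => ?_⟩
  rw [integral_sub_rpow_mul_sub_rpow_eq, show 3 * α - 2 = 2 * α - 2 + (α - 1) + 1 by ring]
  exact integral_rpow_mul_rpow_add_le (by linarith) (by linarith) (by linarith) hrj.le

/-- Singular convolution estimate: for `α ∈ (1/2, 2/3)` and `0 < r_j < r_{j-1} ≤ T`,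
`∫_0^{r_j} (r_j - r)^(2α-2) (r_{j-1} - r)^(α-1) dr ≤ C (r_{j-1} - r_j)^(3α-2)`. -/
theorem stmt_15 (α T : ℝ) (hα : α ∈ Set.Ioo (1 / 2 : ℝ) (2 / 3)) (hT : 0 < T) :
    ∃ C : ℝ, ∀ rj rj1 : ℝ, 0 < rj → rj < rj1 → rj1 ≤ T →
      (∫ r in (0 : ℝ)..rj, (rj - r) ^ (2 * α - 2) * (rj1 - r) ^ (α - 1))
        ≤ C * (rj1 - rj) ^ (3 * α - 2) :=
  stmt_15_general α T hα
end

section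
/- Let α ∈ (1/2,1), T > 0, n ≥ 1, t_k = kT/n, and let i(t) be the index with t_{i(t)} ≤ t < t_{i(t)+1}. Then there exists C (depending only on α) such that for all t ∈ [0,T] and 1 ≤ k ≤ n, ∑_{i=1}^{min(k, i(t))} ((t_k − t_{i−1})^α − (t_k − t_i)^α)((t − t_{i−1})^{2α−1} − (t − t_i)^{2α−1}) ≤ C (T/n)^{3α−1} ∑_{i=1}^{n} i^{3α−3}, where the left sum is taken over indices i with t_i ≤ t. -/
/-!
Write `h = T/n`, `j = i(t)` and `m = min k j`. For `β ≤ 1` the power `x ↦ x ^ β` has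
decreasing derivative, so an increment of length `h` ending at `b ≥ c > 0` is at most
`h * c ^ (β - 1)`. Applied to both factors of the `i`-th term with `c = (m + 1 - i) h`, this
bounds the term by `h ^ (3α - 1) (m + 1 - i) ^ (3α - 3)`; reversing the order of summation
gives the claim with `C = 1`.
-/

open Finset Real

theorem Finset.sum_Icc_one_reflect {M : Type*} [AddCommMonoid M] (f : ℕ → M) (m : ℕ) :
    ∑ i ∈ Icc 1 m, f (m + 1 - i) = ∑ i ∈ Icc 1 m, f i := by
  have h := sum_Ico_reflect f 1 (Nat.le_succ (m + 1))
  rwa [Nat.add_sub_cancel, Nat.add_sub_cancel_left, Ico_add_one_right_eq_Icc] at h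

theorem Real.rpow_sub_rpow_le_sub_mul_rpow {β a b c : ℝ} (hβ : β ≤ 1) (ha : 0 ≤ a)
    (hab : a ≤ b) (hc : 0 < c) (hcb : c ≤ b) :
    b ^ β - a ^ β ≤ (b - a) * c ^ (β - 1) := by
  have hb : 0 < b := hc.trans_le hcb
  have hab' : a * b ^ (β - 1) ≤ a ^ β := by
    rcases ha.eq_or_lt with rfl | ha
    · simpa using rpow_nonneg le_rfl β
    · calc a * b ^ (β - 1) ≤ a * a ^ (β - 1) :=
            mul_le_mul_of_nonneg_left (rpow_le_rpow_of_nonpos ha hab (by linarith)) ha.le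
        _ = a ^ β := by rw [rpow_sub_one ha.ne', mul_div_cancel₀ _ ha.ne']
  have hbb : b ^ β = b * b ^ (β - 1) := by rw [rpow_sub_one hb.ne', mul_div_cancel₀ _ hb.ne']
  calc b ^ β - a ^ β ≤ (b - a) * b ^ (β - 1) := by rw [hbb]; linarith
    _ ≤ (b - a) * c ^ (β - 1) :=
        mul_le_mul_of_nonneg_left (rpow_le_rpow_of_nonpos hc hcb (by linarith)) (by linarith)

theorem rpow_increments_mul_le {α h t : ℝ} {i j k m : ℕ} (hα₁ : 1 / 2 ≤ α)
    (hα₂ : α ≤ 1) (hh : 0 < h) (him : i ≤ m) (hmk : m ≤ k) (hmj : m ≤ j)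
    (hjt : j * h ≤ t) :
    (((k : ℝ) * h - ((i : ℝ) - 1) * h) ^ α - ((k : ℝ) * h - (i : ℝ) * h) ^ α)
        * ((t - ((i : ℝ) - 1) * h) ^ (2 * α - 1) - (t - (i : ℝ) * h) ^ (2 * α - 1))
      ≤ h ^ (3 * α - 1) * ((m + 1 - i : ℕ) : ℝ) ^ (3 * α - 3) := by
  set s : ℝ := ((m + 1 - i : ℕ) : ℝ) with hs_def
  have hs : s = m + 1 - i := by rw [hs_def, Nat.cast_sub (by omega)]; push_cast; ring
  have hi : (i : ℝ) ≤ m := by exact_mod_cast him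
  have hk : (m : ℝ) ≤ k := by exact_mod_cast hmk
  have hj : (m : ℝ) ≤ j := by exact_mod_cast hmj
  have hsh : 0 < s * h := mul_pos (by rw [hs]; linarith) hh
  have hF₁ : ((k : ℝ) * h - ((i : ℝ) - 1) * h) ^ α - ((k : ℝ) * h - (i : ℝ) * h) ^ α
      ≤ h * (s * h) ^ (α - 1) := by
    refine (rpow_sub_rpow_le_sub_mul_rpow hα₂ (by nlinarith) (by nlinarith) hsh
      (by rw [hs]; nlinarith)).trans_eq ?_
    ring
  have hF₂ : (t - ((i : ℝ) - 1) * h) ^ (2 * α - 1) - (t - (i : ℝ) * h) ^ (2 * α - 1)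
      ≤ h * (s * h) ^ (2 * α - 1 - 1) := by
    refine (rpow_sub_rpow_le_sub_mul_rpow (by linarith) (by nlinarith) (by nlinarith) hsh
      (by rw [hs]; nlinarith)).trans_eq ?_
    ring
  have hF₂_nonneg :
      0 ≤ (t - ((i : ℝ) - 1) * h) ^ (2 * α - 1) - (t - (i : ℝ) * h) ^ (2 * α - 1) :=
    sub_nonneg.2 (rpow_le_rpow (by nlinarith) (by nlinarith) (by linarith))
  calc _ ≤ h * (s * h) ^ (α - 1) * (h * (s * h) ^ (2 * α - 1 - 1)) :=
        mul_le_mul hF₁ hF₂ hF₂_nonneg (by positivity)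
    _ = h * h * (s * h) ^ (α - 1 + (2 * α - 1 - 1)) := by rw [rpow_add hsh]; ring
    _ = h ^ (3 * α - 1) * s ^ (3 * α - 3) := by
        rw [show α - 1 + (2 * α - 1 - 1) = 3 * α - 3 by ring,
          mul_rpow (by rw [hs]; linarith) hh.le, show 3 * α - 1 = 3 * α - 3 + 1 + 1 by ring,
          rpow_add_one hh.ne', rpow_add_one hh.ne']
        ring

/-- Discrete singular sum estimate: with `t_i = iT/n` and `i(t) = ⌊tn/T⌋` (so `t_i ≤ t` iff
`i ≤ i(t)`), there is `C = C(α)` such that for all `t ∈ [0,T]` and `1 ≤ k ≤ n`,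
`∑_{i=1}^{min(k,i(t))} ((t_k-t_{i-1})^α - (t_k-t_i)^α)((t-t_{i-1})^(2α-1) - (t-t_i)^(2α-1))
  ≤ C (T/n)^(3α-1) ∑_{i=1}^n i^(3α-3)`. -/
theorem stmt_16 (α : ℝ) (hα : α ∈ Set.Ioo (1 / 2 : ℝ) 1) :
    ∃ C : ℝ, ∀ T : ℝ, 0 < T → ∀ n : ℕ, 1 ≤ n → ∀ t ∈ Set.Icc (0 : ℝ) T,
      ∀ k : ℕ, 1 ≤ k → k ≤ n →
      ∑ i ∈ Finset.Icc 1 (min k ⌊t * n / T⌋₊),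
        (((k : ℝ) * T / n - ((i : ℝ) - 1) * T / n) ^ α
            - ((k : ℝ) * T / n - (i : ℝ) * T / n) ^ α)
          * ((t - ((i : ℝ) - 1) * T / n) ^ (2 * α - 1) - (t - (i : ℝ) * T / n) ^ (2 * α - 1))
        ≤ C * (T / n) ^ (3 * α - 1) * ∑ i ∈ Finset.Icc 1 n, (i : ℝ) ^ (3 * α - 3) := by
  refine ⟨1, fun T hT n hn t ht k _ hkn => ?_⟩
  have hh : 0 < T / n := div_pos hT (by exact_mod_cast hn)
  set j := ⌊t * n / T⌋₊
  have hjt : (j : ℝ) * (T / n) ≤ t :=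
    calc (j : ℝ) * (T / n) ≤ t * n / T * (T / n) := by
          gcongr; exact Nat.floor_le (div_nonneg (mul_nonneg ht.1 n.cast_nonneg) hT.le)
      _ = t := by field_simp
  simp only [mul_div_assoc]
  calc _ ≤ ∑ i ∈ Icc 1 (min k j),
        (T / n) ^ (3 * α - 1) * ((min k j + 1 - i : ℕ) : ℝ) ^ (3 * α - 3) :=
        sum_le_sum fun i hi => rpow_increments_mul_le hα.1.le hα.2.le hh (mem_Icc.1 hi).2
          (min_le_left k j) (min_le_right k j) hjt
    _ = (T / n) ^ (3 * α - 1) * ∑ i ∈ Icc 1 (min k j), (i : ℝ) ^ (3 * α - 3) := by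
        rw [← mul_sum, sum_Icc_one_reflect (fun i => (i : ℝ) ^ (3 * α - 3))]
    _ ≤ 1 * (T / n) ^ (3 * α - 1) * ∑ i ∈ Icc 1 n, (i : ℝ) ^ (3 * α - 3) := by
        rw [one_mul]
        gcongr
        exact min_le_of_left_le hkn
end

section
/- Let α ∈ (1/2,1], T > 0, n ≥ 1, t_k = kT/n, η(s) = t_k for t_k ≤ s < t_{k+1}. Define the scheme Malliavin derivative by the recursion D_s X̌_{t_k} = κ_2 ∫_0^{t_k} D_s X̌_{η(u)} ((t_k−u)^{α−1}/Γ(α)) du + σ (t_k−s)^{α−1}/Γ(α) for s ∈ (0,t_k), with D_s X̌_{t_0} = 0. Then there exists C (independent of n, k) such that ∫_0^{t_k} |D_s X̌_{t_k}| ds ≤ C for all 1 ≤ k ≤ n. -/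
/-!
Write `I_k = ∫_0^{t_k} |D_s X̌_{t_k}| ds`. On the cell `[t_i, t_{i+1})` one has `η(u) = t_i`, so
the recursion reads `D_s X̌_{t_k} = κ₂ ∑_{i<k} c_{i,k} D_s X̌_{t_i} + σ (t_k - s)^(α-1)/Γ(α)` with
`c_{i,k} = ∫_{t_i}^{t_{i+1}} (t_k - u)^(α-1)/Γ(α) du`, and integrating gives
`I_k ≤ |σ| T^α/Γ(α+1) + |κ₂| ∑_{i<k} c_{i,k} I_i`.

The partial sums `∑_{a ≤ i < k} c_{i,k} = (t_k - t_a)^α/Γ(α+1)` depend only on elapsed time, not on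
the mesh. Fix `δ > 0` with `|κ₂| δ^α/Γ(α+1) ≤ 1/2`: the memory within distance `δ` of `t_k` then
costs at most half of the current bound, while the older memory sits below `t_k - δ` and is
controlled by the previous stage. The bound is thus propagated over `[0, T]` in `⌊T/δ⌋ + 1` stages,
independently of `n`.
-/

open MeasureTheory Set Filter Topology

noncomputable def riemannLiouvilleKernel (α x : ℝ) : ℝ := x ^ (α - 1) / Real.Gamma α

-- The paper's `c_{i,k}`.
noncomputable def meshWeight (α : ℝ) (t : ℕ → ℝ) (i k : ℕ) : ℝ :=
  ∫ u in t i..t (i + 1), riemannLiouvilleKernel α (t k - u)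

section Kernel

variable {α : ℝ}

lemma riemannLiouvilleKernel_nonneg (hα : 0 ≤ α) {x : ℝ} (hx : 0 ≤ x) :
    0 ≤ riemannLiouvilleKernel α x :=
  div_nonneg (Real.rpow_nonneg hx _) (Real.Gamma_nonneg_of_nonneg hα)

lemma intervalIntegrable_riemannLiouvilleKernel_sub (hα : 0 < α) (r a b : ℝ) :
    IntervalIntegrable (fun u => riemannLiouvilleKernel α (r - u)) volume a b := by
  have := (intervalIntegral.intervalIntegrable_rpow' (a := r - a) (b := r - b)
    (by linarith : -1 < α - 1)).comp_sub_left r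
  simpa [riemannLiouvilleKernel] using this.div_const (Real.Gamma α)

lemma integral_riemannLiouvilleKernel_sub (hα : 0 < α) (r a b : ℝ) :
    ∫ u in a..b, riemannLiouvilleKernel α (r - u) =
      ((r - a) ^ α - (r - b) ^ α) / Real.Gamma (α + 1) := by
  simp only [riemannLiouvilleKernel, intervalIntegral.integral_div]
  rw [intervalIntegral.integral_comp_sub_left (fun v => v ^ (α - 1)) r,
    integral_rpow (Or.inl (by linarith)), sub_add_cancel, Real.Gamma_add_one hα.ne', div_div]

lemma meshWeight_nonneg (hα : 0 ≤ α) {t : ℕ → ℝ} (ht : Monotone t) {i k : ℕ} (hik : i < k) :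
    0 ≤ meshWeight α t i k :=
  intervalIntegral.integral_nonneg (ht i.le_succ) fun _ hu =>
    riemannLiouvilleKernel_nonneg hα (sub_nonneg.2 (hu.2.trans (ht hik)))

lemma sum_meshWeight_Ico (hα : 0 < α) (t : ℕ → ℝ) {a k : ℕ} (hak : a ≤ k) :
    ∑ i ∈ Finset.Ico a k, meshWeight α t i k = (t k - t a) ^ α / Real.Gamma (α + 1) := by
  simp only [meshWeight]
  rw [intervalIntegral.sum_integral_adjacent_intervals_Ico hak fun _ _ =>
      intervalIntegrable_riemannLiouvilleKernel_sub hα _ _ _,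
    integral_riemannLiouvilleKernel_sub hα, sub_self, Real.zero_rpow hα.ne', sub_zero]

lemma exists_pos_mul_rpow_le (K : ℝ) (hα : 0 < α) {c : ℝ} (hc : 0 < c) :
    ∃ δ > 0, K * δ ^ α ≤ c := by
  have hlim : Tendsto (fun δ : ℝ => K * δ ^ α) (𝓝[>] 0) (𝓝 0) := by
    have := ((Real.continuousAt_rpow_const 0 α (Or.inr hα.le)).const_mul K).tendsto
    rw [Real.zero_rpow hα.ne', mul_zero] at this
    exact this.mono_left nhdsWithin_le_nhds
  exact ((hlim.eventually (gt_mem_nhds hc)).and self_mem_nhdsWithin).exists.imp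
    fun δ h => ⟨h.2, h.1.le⟩

end Kernel

def discreteGronwallBound (A B : ℝ) : ℕ → ℝ
  | 0 => 0
  | j + 1 => 2 * A + 2 * B * discreteGronwallBound A B j

lemma discreteGronwallBound_nonneg {A B : ℝ} (hA : 0 ≤ A) (hB : 0 ≤ B) (j : ℕ) :
    0 ≤ discreteGronwallBound A B j := by
  induction j with
  | zero => exact le_rfl
  | succ j ih => simp only [discreteGronwallBound]; positivity

lemma Finset.sum_mul_le_mul_sum_of_le {ι : Type*} {s : Finset ι} {f w : ι → ℝ} {M : ℝ}
    (hw : ∀ i ∈ s, 0 ≤ w i) (hf : ∀ i ∈ s, f i ≤ M) :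
    ∑ i ∈ s, f i * w i ≤ M * ∑ i ∈ s, w i := by
  rw [Finset.mul_sum]
  exact Finset.sum_le_sum fun i hi => mul_le_mul_of_nonneg_right (hf i hi) (hw i hi)

lemma exists_window_start (t : ℕ → ℝ) {δ : ℝ} (hδ : 0 ≤ δ) (k : ℕ) :
    ∃ a ≤ k, t k - t a ≤ δ ∧ ∀ i < a, δ < t k - t i := by
  have hex : ∃ a, t k - t a ≤ δ := ⟨k, by rwa [sub_self]⟩
  exact ⟨Nat.find hex, Nat.find_min' hex (by rwa [sub_self]), Nat.find_spec hex,
    fun i hi => not_le.1 (Nat.find_min hex hi)⟩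

theorem le_discreteGronwallBound {t : ℕ → ℝ} (ht : Monotone t) {c : ℕ → ℕ → ℝ} {I : ℕ → ℝ}
    {n : ℕ} {A K G δ : ℝ} (hA : 0 ≤ A) (hK : 0 ≤ K) (hG : 0 ≤ G) (hδ : 0 ≤ δ)
    (hc : ∀ i k, i < k → 0 ≤ c i k)
    (htotal : ∀ k ≤ n, ∑ i ∈ Finset.range k, c i k ≤ G)
    (hwindow : ∀ a k, a ≤ k → k ≤ n → t k - t a ≤ δ → K * ∑ i ∈ Finset.Ico a k, c i k ≤ 1 / 2)
    (hI : ∀ k ≤ n, I k ≤ A + K * ∑ i ∈ Finset.range k, I i * c i k) (j : ℕ) :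
    ∀ k ≤ n, t k - t 0 < j * δ → I k ≤ discreteGronwallBound A (K * G) j := by
  induction j with
  | zero =>
    intro k _ hk
    rw [Nat.cast_zero, zero_mul] at hk
    linarith [ht (Nat.zero_le k)]
  | succ j ih =>
    set M := discreteGronwallBound A (K * G)
    have hM : ∀ j, 0 ≤ M j := discreteGronwallBound_nonneg hA (mul_nonneg hK hG)
    intro k
    induction k using Nat.strong_induction_on with
    | _ k ihk =>
    intro hkn hk
    obtain ⟨a, hak, hwindow_a, hfar⟩ := exists_window_start t hδ k
    have hold : ∑ i ∈ Finset.range a, I i * c i k ≤ M j * G := by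
      refine (Finset.sum_mul_le_mul_sum_of_le (fun i hi => hc i k ?_)
        fun i hi => ih i ?_ ?_).trans ?_
      · exact (Finset.mem_range.1 hi).trans_le hak
      · exact ((Finset.mem_range.1 hi).trans_le hak).le.trans hkn
      · have := hfar i (Finset.mem_range.1 hi)
        push_cast at hk
        linarith
      · refine mul_le_mul_of_nonneg_left ?_ (hM j)
        refine (Finset.sum_le_sum_of_subset_of_nonneg (Finset.range_subset_range.2 hak)
          fun i hi _ => hc i k (Finset.mem_range.1 hi)).trans (htotal k hkn)
    have hrecent : K * ∑ i ∈ Finset.Ico a k, I i * c i k ≤ M (j + 1) / 2 := by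
      have hsum := Finset.sum_mul_le_mul_sum_of_le (s := Finset.Ico a k) (f := I) (M := M (j + 1))
        (fun i hi => hc i k (Finset.mem_Ico.1 hi).2) fun i hi =>
          ihk i (Finset.mem_Ico.1 hi).2 ((Finset.mem_Ico.1 hi).2.le.trans hkn)
            (by linarith [ht (Finset.mem_Ico.1 hi).2.le])
      have := hwindow a k hak hkn hwindow_a
      nlinarith [hM (j + 1)]
    calc I k ≤ A + K * ∑ i ∈ Finset.range k, I i * c i k := hI k hkn
      _ = A + K * ∑ i ∈ Finset.range a, I i * c i k
          + K * ∑ i ∈ Finset.Ico a k, I i * c i k := by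
        rw [← Finset.sum_range_add_sum_Ico _ hak]; ring
      _ ≤ A + K * (M j * G) + M (j + 1) / 2 := by gcongr
      _ = M (j + 1) := by simp only [M, discreteGronwallBound]; ring

theorem exists_bound_of_le_add_sum_meshWeight {α : ℝ} (hα : 0 < α) {A K T : ℝ} (hA : 0 ≤ A)
    (hK : 0 ≤ K) (hT : 0 ≤ T) :
    ∃ C, ∀ t : ℕ → ℝ, Monotone t → ∀ n, (∀ k ≤ n, t k - t 0 ≤ T) → ∀ I : ℕ → ℝ,
      (∀ k ≤ n, I k ≤ A + K * ∑ i ∈ Finset.range k, I i * meshWeight α t i k) →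
      ∀ k ≤ n, I k ≤ C := by
  have hΓ : 0 < Real.Gamma (α + 1) := Real.Gamma_pos_of_pos (by linarith)
  obtain ⟨δ, hδ, hKδ⟩ := exists_pos_mul_rpow_le (K / Real.Gamma (α + 1)) hα one_half_pos
  refine ⟨discreteGronwallBound A (K * (T ^ α / Real.Gamma (α + 1))) (⌊T / δ⌋₊ + 1),
    fun t ht n htT I hI k hkn => ?_⟩
  refine le_discreteGronwallBound ht hA hK (by positivity) hδ.le
    (fun i k hik => meshWeight_nonneg hα.le ht hik) (fun k hk => ?_) (fun a k hak _ hδak => ?_)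
    hI _ k hkn ?_
  · rw [← Nat.Ico_zero_eq_range, sum_meshWeight_Ico hα t (Nat.zero_le k)]
    gcongr
    · exact sub_nonneg.2 (ht (Nat.zero_le k))
    · exact htT k hk
  · rw [sum_meshWeight_Ico hα t hak]
    calc K * ((t k - t a) ^ α / Real.Gamma (α + 1))
        ≤ K * (δ ^ α / Real.Gamma (α + 1)) := by gcongr; exact sub_nonneg.2 (ht hak)
      _ = K / Real.Gamma (α + 1) * δ ^ α := by ring
      _ ≤ 1 / 2 := hKδ
  · calc t k - t 0 ≤ T := htT k hkn
      _ < (⌊T / δ⌋₊ + 1 : ℕ) * δ := by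
        rw [← div_lt_iff₀ hδ]; push_cast; exact Nat.lt_floor_add_one _

lemma integral_comp_index_mul_eq_sum {t : ℕ → ℝ} (ht : Monotone t) {idx : ℝ → ℕ}
    (hidx : ∀ i u, t i ≤ u → u < t (i + 1) → idx u = i) (f : ℕ → ℝ) {g : ℝ → ℝ} {k : ℕ}
    (hg : ∀ i < k, IntervalIntegrable g volume (t i) (t (i + 1))) :
    ∫ u in t 0..t k, f (idx u) * g u =
      ∑ i ∈ Finset.range k, f i * ∫ u in t i..t (i + 1), g u := by
  have hpiece : ∀ i,
      EqOn (fun u => f i * g u) (fun u => f (idx u) * g u) (Ioo (t i) (t (i + 1))) :=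
    fun i u hu => by simp only [hidx i u hu.1.le hu.2]
  rw [← intervalIntegral.sum_integral_adjacent_intervals fun i hi =>
    (intervalIntegrable_iff_integrableOn_Ioo_of_le (ht i.le_succ)).2
      (((intervalIntegrable_iff_integrableOn_Ioo_of_le (ht i.le_succ)).1
        ((hg i hi).const_mul (f i))).congr_fun (hpiece i) measurableSet_Ioo)]
  refine Finset.sum_congr rfl fun i _ => ?_
  rw [← intervalIntegral.integral_const_mul, intervalIntegral.integral_of_le (ht i.le_succ),
    intervalIntegral.integral_of_le (ht i.le_succ), integral_Ioc_eq_integral_Ioo,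
    integral_Ioc_eq_integral_Ioo, setIntegral_congr_fun measurableSet_Ioo (hpiece i)]

lemma integrableOn_and_integral_abs_le_of_eqOn {X ι : Type*} [MeasurableSpace X]
    {μ : Measure X} {S : Set X} (hS : MeasurableSet S) {F h : X → ℝ} {f : ι → X → ℝ}
    {w : ι → ℝ} {s : Finset ι} {κ σ : ℝ} (hw : ∀ i ∈ s, 0 ≤ w i)
    (hf : ∀ i ∈ s, IntegrableOn (f i) S μ) (hh : IntegrableOn h S μ)
    (hF : EqOn F (fun x => κ * ∑ i ∈ s, f i x * w i + σ * h x) S) :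
    IntegrableOn F S μ ∧
      ∫ x in S, |F x| ∂μ ≤
        |κ| * ∑ i ∈ s, (∫ x in S, |f i x| ∂μ) * w i + |σ| * ∫ x in S, |h x| ∂μ := by
  have hFint : IntegrableOn F S μ :=
    IntegrableOn.congr_fun (((integrable_finsetSum s fun i hi =>
      (hf i hi).mul_const (w i)).const_mul κ).add (hh.const_mul σ)) hF.symm hS
  have hsum : IntegrableOn (fun x => ∑ i ∈ s, |f i x| * w i) S μ :=
    integrable_finsetSum s fun i hi => (hf i hi).abs.mul_const (w i)
  have hbound : ∀ x ∈ S, |F x| ≤ |κ| * ∑ i ∈ s, |f i x| * w i + |σ| * |h x| := fun x hx => by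
    rw [hF hx]
    refine (abs_add_le _ _).trans ?_
    rw [abs_mul, abs_mul]
    gcongr
    refine (Finset.abs_sum_le_sum_abs _ _).trans_eq (Finset.sum_congr rfl fun i hi => ?_)
    rw [abs_mul, abs_of_nonneg (hw i hi)]
  have hbound_int : IntegrableOn (fun x => |κ| * ∑ i ∈ s, |f i x| * w i + |σ| * |h x|) S μ :=
    (hsum.const_mul _).add (hh.abs.const_mul _)
  refine ⟨hFint, (setIntegral_mono_on hFint.abs hbound_int hS hbound).trans_eq ?_⟩
  rw [integral_add (hsum.const_mul _) (hh.abs.const_mul _), integral_const_mul,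
    integral_const_mul, integral_finsetSum _ fun i hi => (hf i hi).abs.mul_const (w i)]
  simp only [integral_mul_const]

-- `D k s` stands for `D_s X̌_{t_k}`, and `idx u` is the index `i` with `η(u) = t_i`.
def SchemeRecursionAt (α κ σ : ℝ) (t : ℕ → ℝ) (idx : ℝ → ℕ) (D : ℕ → ℝ → ℝ) (k : ℕ) : Prop :=
  ∀ s : ℝ, 0 < s → s < t k →
    D k s = κ * (∫ u in (0 : ℝ)..t k, D (idx u) s * riemannLiouvilleKernel α (t k - u))
      + σ * riemannLiouvilleKernel α (t k - s)

section Recursion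

variable {α κ σ : ℝ} {t : ℕ → ℝ} {idx : ℝ → ℕ} {D : ℕ → ℝ → ℝ}

lemma SchemeRecursionAt.eqOn_sum_meshWeight {k : ℕ}
    (hrec : SchemeRecursionAt α κ σ t idx D k) (hα : 0 < α) (ht : Monotone t) (ht0 : t 0 = 0)
    (hidx : ∀ i u, t i ≤ u → u < t (i + 1) → idx u = i) :
    EqOn (D k) (fun s => κ * ∑ i ∈ Finset.range k, D i s * meshWeight α t i k
      + σ * riemannLiouvilleKernel α (t k - s)) (Ioo 0 (t k)) := fun s hs => by
  have hsum := integral_comp_index_mul_eq_sum ht hidx (D · s) (k := k) fun _ _ =>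
    intervalIntegrable_riemannLiouvilleKernel_sub hα (t k) _ _
  rw [ht0] at hsum
  rw [hrec s hs.1 hs.2, hsum]
  rfl

lemma SchemeRecursionAt.integrableOn_and_integral_abs_le {k : ℕ}
    (hrec : SchemeRecursionAt α κ σ t idx D k) (hα : 0 < α) (ht : Monotone t) (ht0 : t 0 = 0)
    (hidx : ∀ i u, t i ≤ u → u < t (i + 1) → idx u = i) (hzero : ∀ i s, t i ≤ s → D i s = 0)
    (hint : ∀ i < k, IntegrableOn (D i) (Ioo 0 (t i))) :
    IntegrableOn (D k) (Ioo 0 (t k)) ∧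
      ∫ s in Ioo 0 (t k), |D k s| ≤ |σ| * t k ^ α / Real.Gamma (α + 1)
        + |κ| * ∑ i ∈ Finset.range k, (∫ s in Ioo 0 (t i), |D i s|) * meshWeight α t i k := by
  have hvanish : ∀ i < k, ∀ s ∈ Ioo 0 (t k) \ Ioo 0 (t i), D i s = 0 := fun i _ s hs =>
    hzero i s (not_lt.1 fun h => hs.2 ⟨hs.1.1, h⟩)
  have hext : ∀ i ∈ Finset.range k, IntegrableOn (D i) (Ioo 0 (t k)) := fun i hi =>
    (hint i (Finset.mem_range.1 hi)).of_forall_sdiff_eq_zero measurableSet_Ioo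
      (hvanish i (Finset.mem_range.1 hi))
  have hsame : ∀ i ∈ Finset.range k,
      ∫ s in Ioo 0 (t k), |D i s| = ∫ s in Ioo 0 (t i), |D i s| :=
    fun i hi => setIntegral_eq_of_subset_of_forall_sdiff_eq_zero measurableSet_Ioo
      (Ioo_subset_Ioo_right (ht (Finset.mem_range.1 hi).le)) fun s hs => by
        rw [hvanish i (Finset.mem_range.1 hi) s hs, abs_zero]
  have htk : 0 ≤ t k := ht0 ▸ ht (Nat.zero_le k)
  have hkernel : IntegrableOn (fun s => riemannLiouvilleKernel α (t k - s)) (Ioo 0 (t k)) :=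
    (intervalIntegrable_iff_integrableOn_Ioo_of_le htk).1
      (intervalIntegrable_riemannLiouvilleKernel_sub hα _ _ _)
  have hkernel_int : ∫ s in Ioo 0 (t k), |riemannLiouvilleKernel α (t k - s)| =
      t k ^ α / Real.Gamma (α + 1) := by
    rw [setIntegral_congr_fun measurableSet_Ioo fun s hs =>
        abs_of_nonneg (riemannLiouvilleKernel_nonneg hα.le (sub_nonneg.2 hs.2.le)),
      ← integral_Ioc_eq_integral_Ioo, ← intervalIntegral.integral_of_le htk,
      integral_riemannLiouvilleKernel_sub hα, sub_zero, sub_self, Real.zero_rpow hα.ne',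
      sub_zero]
  obtain ⟨hDk, hle⟩ := integrableOn_and_integral_abs_le_of_eqOn measurableSet_Ioo
    (fun i hi => meshWeight_nonneg hα.le ht (Finset.mem_range.1 hi)) hext hkernel
    (hrec.eqOn_sum_meshWeight hα ht ht0 hidx)
  refine ⟨hDk, hle.trans_eq ?_⟩
  rw [hkernel_int, Finset.sum_congr rfl fun i hi => by rw [hsame i hi]]
  ring

theorem integral_abs_le_of_schemeRecursionAt (hα : 0 < α) (ht : Monotone t) (ht0 : t 0 = 0)
    (hidx : ∀ i u, t i ≤ u → u < t (i + 1) → idx u = i) (hzero : ∀ i s, t i ≤ s → D i s = 0)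
    {n : ℕ} (hrec : ∀ k, 1 ≤ k → k ≤ n → SchemeRecursionAt α κ σ t idx D k)
    (k : ℕ) (hkn : k ≤ n) :
    ∫ s in Ioo 0 (t k), |D k s| ≤ |σ| * t k ^ α / Real.Gamma (α + 1)
      + |κ| * ∑ i ∈ Finset.range k, (∫ s in Ioo 0 (t i), |D i s|) * meshWeight α t i k := by
  have hrec' : ∀ k ≤ n, SchemeRecursionAt α κ σ t idx D k := fun k hkn s hs hsk => by
    rcases Nat.eq_zero_or_pos k with rfl | hk
    · exact absurd (hs.trans hsk) (by rw [ht0]; exact lt_irrefl 0)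
    · exact hrec k hk hkn s hs hsk
  have hint : ∀ k ≤ n, IntegrableOn (D k) (Ioo 0 (t k)) := by
    intro k
    induction k using Nat.strong_induction_on with
    | _ k ih => exact fun hkn => ((hrec' k hkn).integrableOn_and_integral_abs_le hα ht ht0 hidx
        hzero fun i hi => ih i hi (hi.le.trans hkn)).1
  exact ((hrec' k hkn).integrableOn_and_integral_abs_le hα ht ht0 hidx hzero
    fun i hi => hint i (hi.le.trans hkn)).2

end Recursion

noncomputable def uniformMesh (T : ℝ) (n k : ℕ) : ℝ := k * T / n

section UniformMesh

variable {T : ℝ} {n : ℕ}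

lemma uniformMesh_zero : uniformMesh T n 0 = 0 := by simp [uniformMesh]

lemma uniformMesh_monotone (hT : 0 ≤ T) : Monotone (uniformMesh T n) := fun i j hij => by
  unfold uniformMesh
  gcongr

lemma uniformMesh_nonneg (hT : 0 ≤ T) (k : ℕ) : 0 ≤ uniformMesh T n k := by
  unfold uniformMesh
  positivity

lemma uniformMesh_le (hT : 0 ≤ T) {k : ℕ} (hk : k ≤ n) : uniformMesh T n k ≤ T :=
  div_le_of_le_mul₀ n.cast_nonneg hT (by rw [mul_comm T]; gcongr)

lemma floor_eq_of_mem_uniformMesh (hT : 0 < T) (hn : 0 < n) {i : ℕ} {u : ℝ}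
    (hi : uniformMesh T n i ≤ u) (hi' : u < uniformMesh T n (i + 1)) : ⌊u * n / T⌋₊ = i := by
  have hn' : (0 : ℝ) < n := Nat.cast_pos.2 hn
  unfold uniformMesh at hi hi'
  rw [div_le_iff₀ hn', ← le_div_iff₀ hT] at hi
  rw [lt_div_iff₀ hn', ← div_lt_iff₀ hT] at hi'
  rw [Nat.floor_eq_iff ((Nat.cast_nonneg i).trans hi)]
  exact ⟨hi, by exact_mod_cast hi'⟩

end UniformMesh

theorem stmt_19_general (α κ₂ σ T : ℝ) (hα : 1 / 2 < α) (hT : 0 < T) :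
    ∃ C : ℝ, ∀ n : ℕ, 1 ≤ n → ∀ D : ℕ → ℝ → ℝ,
      (∀ s : ℝ, D 0 s = 0) →
      (∀ k : ℕ, ∀ s : ℝ, (k : ℝ) * T / n ≤ s → D k s = 0) →
      (∀ k : ℕ, 1 ≤ k → k ≤ n → ∀ s : ℝ, 0 < s → s < (k : ℝ) * T / n →
        D k s = κ₂ * (∫ u in (0 : ℝ)..((k : ℝ) * T / n),
              D (⌊u * n / T⌋₊) s * (((k : ℝ) * T / n - u) ^ (α - 1) / Real.Gamma α))
          + σ * (((k : ℝ) * T / n - s) ^ (α - 1) / Real.Gamma α)) →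
      ∀ k : ℕ, 1 ≤ k → k ≤ n →
        (∫ s in (0 : ℝ)..((k : ℝ) * T / n), |D k s|) ≤ C := by
  have hα0 : 0 < α := by linarith
  obtain ⟨C, hC⟩ := exists_bound_of_le_add_sum_meshWeight hα0
    (A := |σ| * T ^ α / Real.Gamma (α + 1)) (by positivity) (abs_nonneg κ₂) hT.le
  refine ⟨C, fun n hn D _ hzero hrec k _ hkn => ?_⟩
  have ht := uniformMesh_monotone (n := n) hT.le
  have hbound := integral_abs_le_of_schemeRecursionAt hα0 ht uniformMesh_zero
    (fun _ _ => floor_eq_of_mem_uniformMesh hT hn) hzero hrec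
  change ∫ s in (0 : ℝ)..uniformMesh T n k, |D k s| ≤ C
  rw [intervalIntegral.integral_of_le (uniformMesh_nonneg hT.le k), integral_Ioc_eq_integral_Ioo]
  refine hC _ ht n (fun k hk => ?_) _ (fun k hk => (hbound k hk).trans ?_) k hkn
  · rw [uniformMesh_zero, sub_zero]
    exact uniformMesh_le hT.le hk
  · gcongr
    exacts [uniformMesh_nonneg hT.le k, uniformMesh_le hT.le hk]

/-- Uniform `L¹` bound for the Malliavin derivative of the scheme: with `t_k = kT/n`,
`η(u) = t_{⌊un/T⌋}`, if `D k s` (standing for `D_s X̌_{t_k}`) vanishes for `s ≥ t_k`, vanishes for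
`k = 0`, and satisfies the recursion
`D k s = κ₂ ∫_0^{t_k} D_{⌊un/T⌋} s ((t_k-u)^(α-1)/Γ(α)) du + σ (t_k-s)^(α-1)/Γ(α)` for
`s ∈ (0, t_k)`, then `∫_0^{t_k} |D k s| ds ≤ C` with `C` independent of `n` and `k`. -/
theorem stmt_19 (α κ₂ σ T : ℝ) (hα : 1 / 2 < α) (hα1 : α ≤ 1) (hT : 0 < T) :
    ∃ C : ℝ, ∀ n : ℕ, 1 ≤ n → ∀ D : ℕ → ℝ → ℝ,
      (∀ s : ℝ, D 0 s = 0) →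
      (∀ k : ℕ, ∀ s : ℝ, (k : ℝ) * T / n ≤ s → D k s = 0) →
      (∀ k : ℕ, 1 ≤ k → k ≤ n → ∀ s : ℝ, 0 < s → s < (k : ℝ) * T / n →
        D k s = κ₂ * (∫ u in (0 : ℝ)..((k : ℝ) * T / n),
              D (⌊u * n / T⌋₊) s * (((k : ℝ) * T / n - u) ^ (α - 1) / Real.Gamma α))
          + σ * (((k : ℝ) * T / n - s) ^ (α - 1) / Real.Gamma α)) →
      ∀ k : ℕ, 1 ≤ k → k ≤ n →
        (∫ s in (0 : ℝ)..((k : ℝ) * T / n), |D k s|) ≤ C :=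
  stmt_19_general α κ₂ σ T hα hT
end
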